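/- arXiv:2312.04073 — 8 statements merged into one kernel-verified Lean document; each statement's English description precedes it below -/
import Mathlib

section
/- If G is continuously differentiable with 0 < G′(v) ≤ κ for all v, then m is (C·κ)-Lipschitz on [0, ∞): for all μ₁, μ₂ ≥ 0, |m(μ₂) − m(μ₁)| ≤ C·κ·|μ₂ − μ₁|. -/
/-!
Write `Q u = sup {t | G t ≤ u}` for the quantile and `E μ` for the set of `u ∈ [0, 1]` with
`c₁ u * μ + c₂ u ≤ Q u`, so that `m μ = inf E μ`. Since `G' ≤ κ`, `Q` grows at rate at
least `1/κ` on `[0, 1]`. Raising `μ` to `ν` raises the cost side at `u` by at most `C (ν - μ)`,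
which the quantile recovers once `u` moves up by `C κ (ν - μ)`: so for every `u ∈ E μ`, either
`u + C κ (ν - μ) ∈ E ν` or it exceeds `1 ∈ E ν`. Together with the monotonicity of `m` this is
the Lipschitz bound.
-/

open Set

lemma Real.nonempty_and_bddAbove_of_sSup_ne_zero {s : Set ℝ} (hs : sSup s ≠ 0) :
    s.Nonempty ∧ BddAbove s := by
  refine ⟨?_, ?_⟩
  · by_contra h
    exact hs (by rw [not_nonempty_iff_eq_empty.1 h, Real.sSup_empty])
  · by_contra h
    exact hs (Real.sSup_of_not_bddAbove h)

lemma abs_sub_le_mul_abs_sub_of_monotoneOn {f : ℝ → ℝ} {s : Set ℝ} {K : ℝ} (hf : MonotoneOn f s)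
    (hK : ∀ x ∈ s, ∀ y ∈ s, x ≤ y → f y ≤ f x + K * (y - x)) {x y : ℝ} (hx : x ∈ s)
    (hy : y ∈ s) : |f y - f x| ≤ K * |y - x| := by
  rcases le_total x y with hxy | hyx
  · rw [abs_of_nonneg (sub_nonneg.2 (hf hx hy hxy)), abs_of_nonneg (sub_nonneg.2 hxy)]
    linarith [hK x hx y hy hxy]
  · rw [abs_sub_comm, abs_sub_comm y, abs_of_nonneg (sub_nonneg.2 (hf hy hx hyx)),
      abs_of_nonneg (sub_nonneg.2 hyx)]
    linarith [hK y hy x hx hyx]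

section Quantile

variable {G : ℝ → ℝ}

lemma map_sSup_sublevel_le (hG : Continuous G) {u : ℝ} (hne : {t | G t ≤ u}.Nonempty)
    (hbdd : BddAbove {t | G t ≤ u}) : G (sSup {t | G t ≤ u}) ≤ u :=
  (isClosed_le hG continuous_const).csSup_mem hne hbdd

lemma sSup_sublevel_add_div_le {κ : ℝ} (hκ : 0 < κ) (hG : Continuous G)
    (hGκ : ∀ ⦃x y⦄, x ≤ y → G y - G x ≤ κ * (y - x)) {a b : ℝ} (hab : a ≤ b)
    (hne : {t | G t ≤ a}.Nonempty) (hbdd : BddAbove {t | G t ≤ b}) :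
    sSup {t | G t ≤ a} + (b - a) / κ ≤ sSup {t | G t ≤ b} := by
  set x := sSup {t | G t ≤ a}
  have hx : G x ≤ a := map_sSup_sublevel_le hG hne (hbdd.mono fun t ht => le_trans ht hab)
  have hstep := hGκ (le_add_of_nonneg_right (div_nonneg (sub_nonneg.2 hab) hκ.le) :
    x ≤ x + (b - a) / κ)
  rw [add_sub_cancel_left, mul_div_cancel₀ _ hκ.ne'] at hstep
  exact le_csSup hbdd (show G (x + (b - a) / κ) ≤ b by linarith)

/-- A nonnegative quantile on `[0, 1]` forces `G 0 ≤ 0`: otherwise some sublevel set at a level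
`u ∈ [0, 1]` below `G 0` would be nonempty with a negative supremum. -/
lemma sublevel_nonempty_of_sSup_nonneg (hG : Continuous G) (hGmono : StrictMono G)
    (hne : {t | G t ≤ 1}.Nonempty) (hbdd : BddAbove {t | G t ≤ 1})
    (hnonneg : ∀ u ∈ Icc (0 : ℝ) 1, 0 ≤ sSup {t | G t ≤ u}) {u : ℝ} (hu : 0 ≤ u) :
    {t | G t ≤ u}.Nonempty := by
  refine ⟨0, le_trans ?_ hu⟩
  by_contra! hG0
  obtain ⟨t₁, ht₁⟩ := hne
  set s := min t₁ (-1)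
  have hs : s < 0 := (min_le_right _ _).trans_lt (by norm_num)
  set v := max (G s) 0
  have hv : v ∈ Icc (0 : ℝ) 1 :=
    ⟨le_max_right _ _, max_le ((hGmono.monotone (min_le_left _ _)).trans ht₁) zero_le_one⟩
  have hvG0 : v < G 0 := max_lt (hGmono hs) hG0
  have hsup : G (sSup {t | G t ≤ v}) ≤ v :=
    map_sSup_sublevel_le hG ⟨s, show G s ≤ v from le_max_left _ _⟩ (hbdd.mono fun t ht => ht.trans hv.2)
  have := hGmono.lt_iff_lt.1 (hsup.trans_lt hvG0)
  linarith [hnonneg v hv]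

end Quantile

def equilibriumSet (c₁ c₂ Q : ℝ → ℝ) (μ : ℝ) : Set ℝ :=
  {u | u ∈ Icc (0 : ℝ) 1 ∧ c₁ u * μ + c₂ u ≤ Q u}

section Equilibrium

variable {c₁ c₂ Q : ℝ → ℝ} {μ ν : ℝ}

lemma bddBelow_equilibriumSet : BddBelow (equilibriumSet c₁ c₂ Q μ) :=
  ⟨0, fun _ hu => hu.1.1⟩

lemma one_mem_equilibriumSet (h₁ : c₁ 1 = 0) (h₂ : c₂ 1 = 0) (hQ : 0 ≤ Q 1) :
    1 ∈ equilibriumSet c₁ c₂ Q μ :=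
  ⟨right_mem_Icc.2 zero_le_one, by simpa [h₁, h₂] using hQ⟩

lemma equilibriumSet_anti (hc₁ : ∀ u ∈ Icc (0 : ℝ) 1, 0 ≤ c₁ u) (hμν : μ ≤ ν) :
    equilibriumSet c₁ c₂ Q ν ⊆ equilibriumSet c₁ c₂ Q μ := fun u hu =>
  ⟨hu.1, le_trans (by gcongr; exact hc₁ u hu.1) hu.2⟩

lemma add_mem_equilibriumSet {κ C : ℝ} (hκ : 0 < κ) (hC : 0 ≤ C)
    (hQ : ∀ a b, 0 ≤ a → a ≤ b → b ≤ 1 → Q a + (b - a) / κ ≤ Q b)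
    (hc₁ : AntitoneOn c₁ (Icc 0 1)) (hc₁C : ∀ u ∈ Icc (0 : ℝ) 1, c₁ u ≤ C)
    (hc₂ : AntitoneOn c₂ (Icc 0 1)) (hν : 0 ≤ ν) (hμν : μ ≤ ν) {u : ℝ}
    (hu : u ∈ equilibriumSet c₁ c₂ Q μ) (hw : u + C * κ * (ν - μ) ≤ 1) :
    u + C * κ * (ν - μ) ∈ equilibriumSet c₁ c₂ Q ν := by
  set w := u + C * κ * (ν - μ)
  have huw : u ≤ w := le_add_of_nonneg_right (by have := sub_nonneg.2 hμν; positivity)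
  have hwIcc : w ∈ Icc (0 : ℝ) 1 := ⟨hu.1.1.trans huw, hw⟩
  refine ⟨hwIcc, ?_⟩
  calc c₁ w * ν + c₂ w
      ≤ c₁ u * ν + c₂ u := by
        gcongr
        exacts [hc₁ hu.1 hwIcc huw, hc₂ hu.1 hwIcc huw]
    _ = c₁ u * μ + c₂ u + c₁ u * (ν - μ) := by ring
    _ ≤ Q u + C * (ν - μ) := by
        gcongr
        exacts [hu.2, hc₁C u hu.1]
    _ = Q u + (w - u) / κ := by
        congr 1
        field_simp
        ring
    _ ≤ Q w := hQ u w hu.1.1 huw hw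

lemma sInf_equilibriumSet_le_add {κ C : ℝ} (hκ : 0 < κ) (hC : 0 ≤ C)
    (hQ : ∀ a b, 0 ≤ a → a ≤ b → b ≤ 1 → Q a + (b - a) / κ ≤ Q b)
    (hc₁ : AntitoneOn c₁ (Icc 0 1)) (hc₁C : ∀ u ∈ Icc (0 : ℝ) 1, c₁ u ≤ C)
    (hc₂ : AntitoneOn c₂ (Icc 0 1)) (h₁ : c₁ 1 = 0) (h₂ : c₂ 1 = 0) (hQ1 : 0 ≤ Q 1)
    (hν : 0 ≤ ν) (hμν : μ ≤ ν) :
    sInf (equilibriumSet c₁ c₂ Q ν) ≤ sInf (equilibriumSet c₁ c₂ Q μ) + C * κ * (ν - μ) := by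
  rw [← sub_le_iff_le_add]
  refine le_csInf ⟨1, one_mem_equilibriumSet h₁ h₂ hQ1⟩ fun u hu => sub_le_iff_le_add.2 ?_
  by_cases hw : u + C * κ * (ν - μ) ≤ 1
  · exact csInf_le bddBelow_equilibriumSet
      (add_mem_equilibriumSet hκ hC hQ hc₁ hc₁C hc₂ hν hμν hu hw)
  · exact (csInf_le bddBelow_equilibriumSet (one_mem_equilibriumSet h₁ h₂ hQ1)).trans
      (not_le.1 hw).le

end Equilibrium

theorem equilibrium_map_lipschitz_general
    (G G' : ℝ → ℝ) (κ : ℝ)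
    (hG_deriv : ∀ v, HasDerivAt G (G' v) v)
    (hG'_pos : ∀ v, 0 < G' v)
    (hG'_le : ∀ v, G' v ≤ κ)
    (Ginv : ℝ → ℝ)
    (hGinv : ∀ u, Ginv u = sSup {t | G t ≤ u})
    (hGinv_nonneg : ∀ u ∈ Icc (0:ℝ) 1, 0 ≤ Ginv u)
    (hGinv_one : 0 < Ginv 1)
    (c1 c2 : ℝ → ℝ) (C : ℝ)
    (hc1_anti : StrictAntiOn c1 (Icc 0 1))
    (hc1_one : c1 1 = 0)
    (hc1_nonneg : ∀ u ∈ Icc (0:ℝ) 1, 0 ≤ c1 u)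
    (hc1_bdd : ∀ u ∈ Icc (0:ℝ) 1, c1 u ≤ C)
    (hc2_anti : AntitoneOn c2 (Icc 0 1))
    (hc2_one : c2 1 = 0)
    (m : ℝ → ℝ)
    (hm : ∀ μ, m μ = sInf {u | u ∈ Icc (0:ℝ) 1 ∧ c1 u * μ + c2 u ≤ Ginv u}) :
    ∀ μ₁ ∈ Ici (0:ℝ), ∀ μ₂ ∈ Ici (0:ℝ), |m μ₂ - m μ₁| ≤ C * κ * |μ₂ - μ₁| := by
  have hκ : 0 < κ := (hG'_pos 0).trans_le (hG'_le 0)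
  have hC : 0 ≤ C := hc1_one ▸ hc1_bdd 1 (right_mem_Icc.2 zero_le_one)
  have hdiff : Differentiable ℝ G := fun v => (hG_deriv v).differentiableAt
  have hGκ := image_sub_le_mul_sub_of_deriv_le hdiff fun v => (hG_deriv v).deriv ▸ hG'_le v
  have hGmono : StrictMono G := strictMono_of_hasDerivAt_pos hG_deriv hG'_pos
  obtain ⟨hne, hbdd⟩ := Real.nonempty_and_bddAbove_of_sSup_ne_zero (hGinv 1 ▸ hGinv_one.ne')
  have hQ : ∀ a b, 0 ≤ a → a ≤ b → b ≤ 1 → Ginv a + (b - a) / κ ≤ Ginv b := by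
    intro a b ha hab hb
    rw [hGinv, hGinv]
    exact sSup_sublevel_add_div_le hκ hdiff.continuous hGκ hab
      (sublevel_nonempty_of_sSup_nonneg hdiff.continuous hGmono hne hbdd
        (fun u hu => hGinv u ▸ hGinv_nonneg u hu) ha)
      (hbdd.mono fun t ht => le_trans ht hb)
  have hone : ∀ μ, 1 ∈ equilibriumSet c1 c2 Ginv μ := fun _ =>
    one_mem_equilibriumSet hc1_one hc2_one hGinv_one.le
  change ∀ μ, m μ = sInf (equilibriumSet c1 c2 Ginv μ) at hm
  refine fun μ₁ hμ₁ μ₂ hμ₂ => abs_sub_le_mul_abs_sub_of_monotoneOn ?_ ?_ hμ₁ hμ₂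
  · intro μ _ ν _ hμν
    rw [hm, hm]
    exact csInf_le_csInf bddBelow_equilibriumSet ⟨1, hone ν⟩ (equilibriumSet_anti hc1_nonneg hμν)
  · intro μ _ ν hν hμν
    rw [hm, hm]
    exact sInf_equilibriumSet_le_add hκ hC hQ hc1_anti.antitoneOn hc1_bdd hc2_anti hc1_one
      hc2_one hGinv_one.le hν hμν

/-- If `G` is continuously differentiable with `0 < G′(v) ≤ κ` for all `v`,
then the equilibrium map `m` is `(C·κ)`-Lipschitz on `[0, ∞)`. -/
theorem equilibrium_map_lipschitz
    (G G' : ℝ → ℝ) (κ : ℝ)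
    (hG_deriv : ∀ v, HasDerivAt G (G' v) v)
    (hG'_cont : Continuous G')
    (hG'_pos : ∀ v, 0 < G' v)
    (hG'_le : ∀ v, G' v ≤ κ)
    (Ginv : ℝ → ℝ)
    (hGinv : ∀ u, Ginv u = sSup {t | G t ≤ u})
    (hGinv_mono : MonotoneOn Ginv (Icc 0 1))
    (hGinv_nonneg : ∀ u ∈ Icc (0:ℝ) 1, 0 ≤ Ginv u)
    (hGinv_one : 0 < Ginv 1)
    (c1 c2 : ℝ → ℝ) (C : ℝ) (hC : 0 < C)
    (hc1_cont : ContinuousOn c1 (Icc 0 1))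
    (hc1_anti : StrictAntiOn c1 (Icc 0 1))
    (hc1_one : c1 1 = 0)
    (hc1_nonneg : ∀ u ∈ Icc (0:ℝ) 1, 0 ≤ c1 u)
    (hc1_bdd : ∀ u ∈ Icc (0:ℝ) 1, c1 u ≤ C)
    (hc2_cont : ContinuousOn c2 (Icc 0 1))
    (hc2_anti : AntitoneOn c2 (Icc 0 1))
    (hc2_one : c2 1 = 0)
    (m : ℝ → ℝ)
    (hm : ∀ μ, m μ = sInf {u | u ∈ Icc (0:ℝ) 1 ∧ c1 u * μ + c2 u ≤ Ginv u}) :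
    ∀ μ₁ ∈ Ici (0:ℝ), ∀ μ₂ ∈ Ici (0:ℝ), |m μ₂ - m μ₁| ≤ C * κ * |μ₂ - μ₁| :=
  equilibrium_map_lipschitz_general G G' κ hG_deriv hG'_pos hG'_le Ginv hGinv hGinv_nonneg hGinv_one
    c1 c2 C hc1_anti hc1_one hc1_nonneg hc1_bdd hc2_anti hc2_one m hm
end

section
/- (Regime R2 of Theorem 1, reduced problem.) Suppose 0 ≤ θ̄ < μ° ≤ M. Then sup{ q ∈ [0,1] : there exists μ₂ ∈ [μ°, M] with q·θ̄ + (1−q)·μ₂ = μ° and ∫₀^q F⁻¹(s) ds ≤ q·θ̄ } = min{ f̄(θ̄), (M − μ°)/(M − θ̄) }, and this supremum is attained. -/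
/-!
The average `(1/x) ∫₀ˣ F⁻¹` of a monotone function is nondecreasing in `x`, so the set of
`x ∈ [0,1]` where it is at most `θ̄` is an initial segment of `[0,1]`; it is closed because the
primitive is continuous, hence equal to `[0, f̄(θ̄)]`. For `q ∈ [0,1]` a second posterior mean
`μ₂ ∈ [μ°, M]` with `q θ̄ + (1 - q) μ₂ = μ°` exists exactly when `q ≤ (M - μ°)/(M - θ̄)`, so the
feasible set is `[0, min (f̄(θ̄)) ((M - μ°)/(M - θ̄))]`.
-/

open Set

theorem MonotoneOn.sub_mul_intervalIntegral_le_sub_mul_intervalIntegral {f : ℝ → ℝ}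
    {a b x y : ℝ} (hf : MonotoneOn f (Icc a b)) (hay : a ≤ y) (hyx : y ≤ x) (hxb : x ≤ b) :
    (x - a) * ∫ t in a..y, f t ≤ (y - a) * ∫ t in a..x, f t := by
  have hintegrable :
      ∀ c d, a ≤ c → c ≤ d → d ≤ b → IntervalIntegrable f MeasureTheory.volume c d :=
    fun c d hac hcd hdb => (hf.mono (uIcc_of_le hcd ▸ Icc_subset_Icc hac hdb)).intervalIntegrable
  have hleft : ∫ t in a..y, f t ≤ (y - a) * f y := by
    have := intervalIntegral.integral_mono_on hay (hintegrable a y le_rfl hay (hyx.trans hxb))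
      intervalIntegrable_const fun t ht =>
        hf ⟨ht.1, ht.2.trans (hyx.trans hxb)⟩ ⟨hay, hyx.trans hxb⟩ ht.2
    simpa [mul_comm] using this
  have hright : (x - y) * f y ≤ ∫ t in y..x, f t := by
    have := intervalIntegral.integral_mono_on hyx intervalIntegrable_const
      (hintegrable y x hay hyx hxb) fun t ht =>
        hf ⟨hay, hyx.trans hxb⟩ ⟨hay.trans ht.1, ht.2.trans hxb⟩ ht.1
    simpa [mul_comm] using this
  have hsplit : (∫ t in a..y, f t) + ∫ t in y..x, f t = ∫ t in a..x, f t :=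
    intervalIntegral.integral_add_adjacent_intervals (hintegrable a y le_rfl hay (hyx.trans hxb))
      (hintegrable y x hay hyx hxb)
  calc (x - a) * ∫ t in a..y, f t
      = (y - a) * (∫ t in a..y, f t) + (x - y) * ∫ t in a..y, f t := by ring
    _ ≤ (y - a) * (∫ t in a..y, f t) + (y - a) * ((x - y) * f y) := by
      linarith [mul_le_mul_of_nonneg_left hleft (sub_nonneg.2 hyx)]
    _ ≤ (y - a) * (∫ t in a..y, f t) + (y - a) * ∫ t in y..x, f t := by
      gcongr
    _ = (y - a) * ∫ t in a..x, f t := by rw [← hsplit]; ring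

/-- The paper's `f̄(θ)` is `sSup (averageLeSet F⁻¹ θ)`. -/
def averageLeSet (f : ℝ → ℝ) (θ : ℝ) : Set ℝ :=
  {x | x ∈ Icc (0:ℝ) 1 ∧ (∫ s in (0:ℝ)..x, f s) ≤ x * θ}

section averageLeSet

variable {f : ℝ → ℝ} {θ : ℝ}

theorem zero_mem_averageLeSet : (0:ℝ) ∈ averageLeSet f θ :=
  ⟨left_mem_Icc.2 zero_le_one, by simp⟩

theorem isClosed_averageLeSet (hf : MonotoneOn f (Icc 0 1)) : IsClosed (averageLeSet f θ) := by
  rw [← uIcc_of_le zero_le_one] at hf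
  have hprimitive := intervalIntegral.continuousOn_primitive_interval
    (hf.integrableOn_isCompact (μ := MeasureTheory.volume) isCompact_uIcc)
  rw [uIcc_of_le zero_le_one] at hprimitive
  exact isClosed_Icc.isClosed_le hprimitive (continuousOn_id.mul continuousOn_const)

theorem mem_averageLeSet_of_le (hf : MonotoneOn f (Icc 0 1)) {x y : ℝ}
    (hx : x ∈ averageLeSet f θ) (hy : 0 ≤ y) (hyx : y ≤ x) : y ∈ averageLeSet f θ := by
  obtain ⟨⟨-, hx1⟩, hGx⟩ := hx
  refine ⟨⟨hy, hyx.trans hx1⟩, ?_⟩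
  rcases (hy.trans hyx).eq_or_lt with rfl | hx0
  · simp [le_antisymm hyx hy]
  · have hmono := hf.sub_mul_intervalIntegral_le_sub_mul_intervalIntegral hy hyx hx1
    simp only [sub_zero] at hmono
    refine le_of_mul_le_mul_left ?_ hx0
    calc x * ∫ s in (0:ℝ)..y, f s ≤ y * ∫ s in (0:ℝ)..x, f s := hmono
      _ ≤ y * (x * θ) := mul_le_mul_of_nonneg_left hGx hy
      _ = x * (y * θ) := by ring

theorem averageLeSet_eq_Icc (hf : MonotoneOn f (Icc 0 1)) :
    averageLeSet f θ = Icc 0 (sSup (averageLeSet f θ)) := by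
  have hbdd : BddAbove (averageLeSet f θ) := ⟨1, fun _ hx => hx.1.2⟩
  have hsSup : sSup (averageLeSet f θ) ∈ averageLeSet f θ :=
    (isClosed_averageLeSet hf).csSup_mem ⟨0, zero_mem_averageLeSet⟩ hbdd
  ext x
  exact ⟨fun hx => ⟨hx.1.1, le_csSup hbdd hx⟩,
    fun hx => mem_averageLeSet_of_le hf hsSup hx.1 hx.2⟩

end averageLeSet

theorem exists_mem_Icc_mul_add_one_sub_mul_eq_iff {q θ μ M : ℝ} (hq : q ∈ Icc (0:ℝ) 1)
    (hθμ : θ < μ) (hμM : μ ≤ M) :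
    (∃ μ₂ ∈ Icc μ M, q * θ + (1 - q) * μ₂ = μ) ↔ q ≤ (M - μ) / (M - θ) := by
  have hMθ : 0 < M - θ := by linarith
  rw [le_div_iff₀ hMθ]
  constructor
  · rintro ⟨μ₂, ⟨-, hμ₂M⟩, hmean⟩
    nlinarith [mul_le_mul_of_nonneg_left hμ₂M (sub_nonneg.2 hq.2)]
  · intro hqρ
    have h1q : 0 < 1 - q := by nlinarith
    refine ⟨(μ - q * θ) / (1 - q), ⟨?_, ?_⟩, by field_simp; ring⟩
    · rw [le_div_iff₀ h1q]; nlinarith [hq.1]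
    · rw [div_le_iff₀ h1q]; linarith

theorem regime_R2_reduced_general
    (M : ℝ) (Finv : ℝ → ℝ)
    (hFinv_mono : MonotoneOn Finv (Icc 0 1))
    (μ0 : ℝ)
    (fbar : ℝ → ℝ)
    (hfbar : ∀ θ, fbar θ =
      sSup {x | x ∈ Icc (0:ℝ) 1 ∧ (∫ s in (0:ℝ)..x, Finv s) ≤ x * θ})
    (θbar : ℝ) (hθbar_lt : θbar < μ0) (hμ0M : μ0 ≤ M) :
    IsGreatest
      {q | q ∈ Icc (0:ℝ) 1 ∧ ∃ μ₂ ∈ Icc μ0 M,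
        q * θbar + (1 - q) * μ₂ = μ0 ∧ (∫ s in (0:ℝ)..q, Finv s) ≤ q * θbar}
      (min (fbar θbar) ((M - μ0) / (M - θbar))) := by
  have hS : averageLeSet Finv θbar = Icc 0 (fbar θbar) :=
    hfbar θbar ▸ averageLeSet_eq_Icc hFinv_mono
  have hfbar_nonneg : 0 ≤ fbar θbar := (hS ▸ zero_mem_averageLeSet (f := Finv) (θ := θbar)).2
  have hρ_nonneg : 0 ≤ (M - μ0) / (M - θbar) := div_nonneg (by linarith) (by linarith)
  suffices hfeasible : {q | q ∈ Icc (0:ℝ) 1 ∧ ∃ μ₂ ∈ Icc μ0 M,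
      q * θbar + (1 - q) * μ₂ = μ0 ∧ (∫ s in (0:ℝ)..q, Finv s) ≤ q * θbar} =
      Icc 0 (min (fbar θbar) ((M - μ0) / (M - θbar))) by
    rw [hfeasible]
    exact isGreatest_Icc (le_min hfbar_nonneg hρ_nonneg)
  ext q
  rw [mem_Icc, le_min_iff, ← and_assoc, ← mem_Icc, ← hS]
  constructor
  · rintro ⟨hq, μ₂, hμ₂, hmean, hintegral⟩
    exact ⟨⟨hq, hintegral⟩,
      (exists_mem_Icc_mul_add_one_sub_mul_eq_iff hq hθbar_lt hμ0M).1 ⟨μ₂, hμ₂, hmean⟩⟩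
  · rintro ⟨⟨hq, hintegral⟩, hqρ⟩
    obtain ⟨μ₂, hμ₂, hmean⟩ :=
      (exists_mem_Icc_mul_add_one_sub_mul_eq_iff hq hθbar_lt hμ0M).2 hqρ
    exact ⟨hq, μ₂, hμ₂, hmean, hintegral⟩

/-- Regime R2 of Theorem 1, reduced problem: if `0 ≤ θ̄ < μ° ≤ M`, then
the supremum of `q ∈ [0,1]` such that there is `μ₂ ∈ [μ°, M]` with
`q·θ̄ + (1−q)·μ₂ = μ°` and `∫₀^q F⁻¹ ≤ q·θ̄` equals
`min (f̄(θ̄)) ((M − μ°)/(M − θ̄))`, and it is attained. -/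
theorem regime_R2_reduced
    (M : ℝ) (hM : 0 < M) (Finv : ℝ → ℝ)
    (hFinv_mono : MonotoneOn Finv (Icc 0 1))
    (hFinv_range : ∀ s ∈ Icc (0:ℝ) 1, Finv s ∈ Icc 0 M)
    (hFinv_int : IntervalIntegrable Finv MeasureTheory.volume 0 1)
    (μ0 : ℝ) (hμ0 : μ0 = ∫ s in (0:ℝ)..1, Finv s)
    (fbar : ℝ → ℝ)
    (hfbar : ∀ θ, fbar θ =
      sSup {x | x ∈ Icc (0:ℝ) 1 ∧ (∫ s in (0:ℝ)..x, Finv s) ≤ x * θ})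
    (θbar : ℝ) (hθbar_nonneg : 0 ≤ θbar) (hθbar_lt : θbar < μ0) (hμ0M : μ0 ≤ M) :
    IsGreatest
      {q | q ∈ Icc (0:ℝ) 1 ∧ ∃ μ₂ ∈ Icc μ0 M,
        q * θbar + (1 - q) * μ₂ = μ0 ∧ (∫ s in (0:ℝ)..q, Finv s) ≤ q * θbar}
      (min (fbar θbar) ((M - μ0) / (M - θbar))) :=
  regime_R2_reduced_general M Finv hFinv_mono μ0 fbar hfbar θbar hθbar_lt hμ0M
end

section
/- (Regime R3 of Theorem 1, reduced problem.) Suppose 0 ≤ μ° < θ̲ ≤ θ̄ ≤ M (so θ̲ > 0). Define q₂* := inf{ q ∈ [(θ̲ − μ°)/θ̲, 1] : q ≤ f̄(θ̲ − (θ̲ − μ°)/q) }. Then sup{ 1 − q₂ : q₂ ∈ (0,1], and there exist μ₁ ∈ [θ̲, θ̄] and μ₂ ∈ [0, μ°] with q₂·μ₂ + (1−q₂)·μ₁ = μ° and ∫₀^{q₂} F⁻¹(s) ds ≤ q₂·μ₂ } = 1 − q₂*. -/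
open Set

lemma R3aux_int_le_const {Finv : ℝ → ℝ} {a b C : ℝ} (hab : a ≤ b)
    (hint : IntervalIntegrable Finv MeasureTheory.volume a b)
    (hb : ∀ s ∈ Icc a b, Finv s ≤ C) :
    (∫ s in a..b, Finv s) ≤ (b - a) * C := by
  have := intervalIntegral.integral_mono_on hab hint intervalIntegrable_const hb
  simpa [smul_eq_mul] using this

lemma R3aux_const_le_int {Finv : ℝ → ℝ} {a b C : ℝ} (hab : a ≤ b)
    (hint : IntervalIntegrable Finv MeasureTheory.volume a b)
    (hb : ∀ s ∈ Icc a b, C ≤ Finv s) :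
    (b - a) * C ≤ ∫ s in a..b, Finv s := by
  have := intervalIntegral.integral_mono_on hab intervalIntegrable_const hint hb
  simpa [smul_eq_mul] using this

lemma R3aux_sub_integrable {Finv : ℝ → ℝ}
    (hint : IntervalIntegrable Finv MeasureTheory.volume 0 1)
    {a b : ℝ} (h0 : 0 ≤ a) (hab : a ≤ b) (hb1 : b ≤ 1) :
    IntervalIntegrable Finv MeasureTheory.volume a b := by
  apply hint.mono_set
  rw [uIcc_of_le hab, uIcc_of_le zero_le_one]
  exact Icc_subset_Icc h0 hb1

lemma R3aux_avg_mono {Finv : ℝ → ℝ} (hmono : MonotoneOn Finv (Icc 0 1))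
    (hint : IntervalIntegrable Finv MeasureTheory.volume 0 1)
    {q x : ℝ} (hq0 : 0 ≤ q) (hqx : q ≤ x) (hx1 : x ≤ 1) :
    x * ∫ s in (0:ℝ)..q, Finv s ≤ q * ∫ s in (0:ℝ)..x, Finv s := by
  have hq1 : q ≤ 1 := hqx.trans hx1
  have hint1 : IntervalIntegrable Finv MeasureTheory.volume 0 q :=
    R3aux_sub_integrable hint le_rfl hq0 hq1
  have hint2 : IntervalIntegrable Finv MeasureTheory.volume q x :=
    R3aux_sub_integrable hint hq0 hqx hx1
  have hqmem : q ∈ Icc (0:ℝ) 1 := ⟨hq0, hq1⟩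
  have h1 : (∫ s in (0:ℝ)..q, Finv s) ≤ (q - 0) * Finv q :=
    R3aux_int_le_const hq0 hint1
      (fun s hs => hmono ⟨hs.1, hs.2.trans hq1⟩ hqmem hs.2)
  have h2 : (x - q) * Finv q ≤ ∫ s in q..x, Finv s :=
    R3aux_const_le_int hqx hint2
      (fun s hs => hmono hqmem ⟨hq0.trans hs.1, hs.2.trans hx1⟩ hs.1)
  have h3 : (∫ s in (0:ℝ)..x, Finv s)
      = (∫ s in (0:ℝ)..q, Finv s) + ∫ s in q..x, Finv s :=
    (intervalIntegral.integral_add_adjacent_intervals hint1 hint2).symm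
  nlinarith [mul_le_mul_of_nonneg_left h1 (sub_nonneg.mpr hqx),
    mul_le_mul_of_nonneg_left h2 hq0]

set_option maxHeartbeats 1000000 in
/-- Regime R3 of Theorem 1, reduced problem: if `0 ≤ μ° < θ̲ ≤ θ̄ ≤ M`,
then with `q₂* = inf {q ∈ [(θ̲−μ°)/θ̲, 1] : q ≤ f̄(θ̲ − (θ̲−μ°)/q)}`, the supremum of
`1 − q₂` over `q₂ ∈ (0,1]` admitting `μ₁ ∈ [θ̲, θ̄]` and `μ₂ ∈ [0, μ°]` with
`q₂·μ₂ + (1−q₂)·μ₁ = μ°` and `∫₀^{q₂} F⁻¹ ≤ q₂·μ₂` equals `1 − q₂*`. -/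
theorem regime_R3_reduced
    (M : ℝ) (hM : 0 < M) (Finv : ℝ → ℝ)
    (hFinv_mono : MonotoneOn Finv (Icc 0 1))
    (hFinv_range : ∀ s ∈ Icc (0:ℝ) 1, Finv s ∈ Icc 0 M)
    (hFinv_int : IntervalIntegrable Finv MeasureTheory.volume 0 1)
    (μ0 : ℝ) (hμ0 : μ0 = ∫ s in (0:ℝ)..1, Finv s)
    (fbar : ℝ → ℝ)
    (hfbar : ∀ θ, fbar θ =
      sSup {x | x ∈ Icc (0:ℝ) 1 ∧ (∫ s in (0:ℝ)..x, Finv s) ≤ x * θ})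
    (θlo θhi : ℝ) (hμ0_nonneg : 0 ≤ μ0) (hμ0_lt : μ0 < θlo)
    (hlohi : θlo ≤ θhi) (hθhiM : θhi ≤ M) :
    sSup {v | ∃ q₂ ∈ Ioc (0:ℝ) 1,
        (∃ μ₁ ∈ Icc θlo θhi, ∃ μ₂ ∈ Icc (0:ℝ) μ0,
          q₂ * μ₂ + (1 - q₂) * μ₁ = μ0 ∧ (∫ s in (0:ℝ)..q₂, Finv s) ≤ q₂ * μ₂) ∧
        v = 1 - q₂} =
      1 - sInf {q | q ∈ Icc ((θlo - μ0) / θlo) 1 ∧ q ≤ fbar (θlo - (θlo - μ0) / q)} := by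
  have hθlo : 0 < θlo := lt_of_le_of_lt hμ0_nonneg hμ0_lt
  set c : ℝ := (θlo - μ0) / θlo with hc_def
  have hc_pos : 0 < c := div_pos (by linarith) hθlo
  have hc_le_one : c ≤ 1 := by
    rw [div_le_one hθlo]; linarith
  set B : Set ℝ := {q | q ∈ Icc c 1 ∧ q ≤ fbar (θlo - (θlo - μ0) / q)} with hB_def
  -- sets S θ are bounded above by 1 and contain 0
  have hSbdd : ∀ θ : ℝ, BddAbove {x | x ∈ Icc (0:ℝ) 1 ∧ (∫ s in (0:ℝ)..x, Finv s) ≤ x * θ} :=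
    fun θ => ⟨1, fun x hx => hx.1.2⟩
  -- 1 ∈ B
  have h1B : (1:ℝ) ∈ B := by
    constructor
    · exact ⟨hc_le_one, le_rfl⟩
    · rw [hfbar]
      apply le_csSup (hSbdd _)
      refine ⟨⟨zero_le_one, le_rfl⟩, ?_⟩
      have : θlo - (θlo - μ0) / 1 = μ0 := by ring
      rw [this, ← hμ0, one_mul]
  have hBne : B.Nonempty := ⟨1, h1B⟩
  have hBbdd : BddBelow B := ⟨c, fun q hq => hq.1.1⟩
  -- key equivalence: feasibility ↔ membership in B
  have hAB : ∀ q : ℝ, (q ∈ Ioc (0:ℝ) 1 ∧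
      (∃ μ₁ ∈ Icc θlo θhi, ∃ μ₂ ∈ Icc (0:ℝ) μ0,
        q * μ₂ + (1 - q) * μ₁ = μ0 ∧ (∫ s in (0:ℝ)..q, Finv s) ≤ q * μ₂)) ↔ q ∈ B := by
    intro q
    constructor
    · rintro ⟨⟨hq0, hq1⟩, μ₁, ⟨hμ₁lo, hμ₁hi⟩, μ₂, ⟨hμ₂0, hμ₂μ0⟩, heq, hintle⟩
      have h1q : 0 ≤ 1 - q := by linarith
      have hqμ₂ : 0 ≤ q * μ₂ := mul_nonneg hq0.le hμ₂0
      have hμ0ge : (1 - q) * θlo ≤ μ0 := by nlinarith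
      have hqc : c ≤ q := by
        rw [hc_def, div_le_iff₀ hθlo]; nlinarith
      have hkey : (∫ s in (0:ℝ)..q, Finv s) ≤ q * (θlo - (θlo - μ0) / q) := by
        have hqne : q ≠ 0 := ne_of_gt hq0
        have : q * (θlo - (θlo - μ0) / q) = μ0 - (1 - q) * θlo := by
          field_simp; ring
        rw [this]
        have : q * μ₂ = μ0 - (1 - q) * μ₁ := by linarith
        nlinarith
      refine ⟨⟨hqc, hq1⟩, ?_⟩
      rw [hfbar]
      exact le_csSup (hSbdd _) ⟨⟨hq0.le, hq1⟩, hkey⟩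
    · rintro ⟨⟨hqc, hq1⟩, hqfbar⟩
      have hq0 : 0 < q := lt_of_lt_of_le hc_pos hqc
      set θ : ℝ := θlo - (θlo - μ0) / q with hθ_def
      have hqθ : q * θ = μ0 - (1 - q) * θlo := by
        rw [hθ_def]; field_simp; ring
      have hθ0 : 0 ≤ θ := by
        have h : (θlo - μ0) / q ≤ θlo := by
          rw [div_le_iff₀ hq0]
          have := (div_le_iff₀ hθlo).mp hqc
          nlinarith
        rw [hθ_def]; linarith
      have hθM : θ ≤ M := by
        have : 0 ≤ (θlo - μ0) / q := div_nonneg (by linarith) hq0.le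
        have hθloM : θlo ≤ M := hlohi.trans hθhiM
        rw [hθ_def]; linarith
      -- the MPC constraint at q holds
      have hkey : (∫ s in (0:ℝ)..q, Finv s) ≤ q * θ := by
        apply le_of_forall_pos_le_add
        intro δ hδ
        set ε : ℝ := δ / (M - θ + 1) with hε_def
        have hMθ : 0 ≤ M - θ := by linarith
        have hε_pos : 0 < ε := div_pos hδ (by linarith)
        have hSne : ({x | x ∈ Icc (0:ℝ) 1 ∧ (∫ s in (0:ℝ)..x, Finv s) ≤ x * θ}).Nonempty := by
          refine ⟨0, ⟨le_rfl, zero_le_one⟩, ?_⟩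
          rw [intervalIntegral.integral_same, zero_mul]
        have hlt : q - ε < sSup {x | x ∈ Icc (0:ℝ) 1 ∧ (∫ s in (0:ℝ)..x, Finv s) ≤ x * θ} := by
          rw [← hfbar]; linarith
        obtain ⟨x, ⟨⟨hx0, hx1⟩, hxint⟩, hxgt⟩ := exists_lt_of_lt_csSup hSne hlt
        rcases le_or_gt q x with hqx | hxq
        · -- q ≤ x : use the averaging lemma
          have hx_pos : 0 < x := lt_of_lt_of_le hq0 hqx
          have havg := R3aux_avg_mono hFinv_mono hFinv_int hq0.le hqx hx1
          have : x * ∫ s in (0:ℝ)..q, Finv s ≤ q * (x * θ) :=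
            havg.trans (mul_le_mul_of_nonneg_left hxint hq0.le)
          nlinarith
        · -- x < q : split the integral, bound the tail by M
          have hint1 : IntervalIntegrable Finv MeasureTheory.volume 0 x :=
            R3aux_sub_integrable hFinv_int le_rfl hx0 hx1
          have hint2 : IntervalIntegrable Finv MeasureTheory.volume x q :=
            R3aux_sub_integrable hFinv_int hx0 hxq.le hq1
          have hsplit : (∫ s in (0:ℝ)..q, Finv s)
              = (∫ s in (0:ℝ)..x, Finv s) + ∫ s in x..q, Finv s :=
            (intervalIntegral.integral_add_adjacent_intervals hint1 hint2).symm
          have htail : (∫ s in x..q, Finv s) ≤ (q - x) * M :=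
            R3aux_int_le_const hxq.le hint2
              (fun s hs => (hFinv_range s ⟨hx0.trans hs.1, hs.2.trans hq1⟩).2)
          have hεM : (q - x) * (M - θ) ≤ δ := by
            have h1 : q - x ≤ ε := by linarith
            have h2 : (q - x) * (M - θ) ≤ ε * (M - θ) :=
              mul_le_mul_of_nonneg_right h1 hMθ
            have h3 : ε * (M - θ) ≤ δ := by
              rw [hε_def, div_mul_eq_mul_div, div_le_iff₀ (by linarith : (0:ℝ) < M - θ + 1)]
              nlinarith
            linarith
          nlinarith
      -- witnesses μ₁ = θlo, μ₂ = θ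
      refine ⟨⟨hq0, hq1⟩, θlo, ⟨le_rfl, hlohi⟩, θ, ⟨hθ0, ?_⟩, ?_, ?_⟩
      · -- θ ≤ μ0
        have h1 : θlo - μ0 ≤ (θlo - μ0) / q := by
          rw [le_div_iff₀ hq0]; nlinarith
        rw [hθ_def]; linarith
      · rw [hqθ]; ring
      · rw [hqθ] at hkey; rw [hqθ]; exact hkey
  -- rewrite the LHS set as the image of B under (1 - ·)
  have hset : {v | ∃ q₂ ∈ Ioc (0:ℝ) 1,
      (∃ μ₁ ∈ Icc θlo θhi, ∃ μ₂ ∈ Icc (0:ℝ) μ0,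
        q₂ * μ₂ + (1 - q₂) * μ₁ = μ0 ∧ (∫ s in (0:ℝ)..q₂, Finv s) ≤ q₂ * μ₂) ∧
      v = 1 - q₂} = (fun q => 1 - q) '' B := by
    ext v
    constructor
    · rintro ⟨q, hq, hP, rfl⟩
      exact ⟨q, (hAB q).mp ⟨hq, hP⟩, rfl⟩
    · rintro ⟨q, hqB, rfl⟩
      obtain ⟨hq, hP⟩ := (hAB q).mpr hqB
      exact ⟨q, hq, hP, rfl⟩
  rw [hset]
  -- now compute the sup of the image
  have hTne : ((fun q => 1 - q) '' B).Nonempty := hBne.image _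
  have hTbdd : BddAbove ((fun q => 1 - q) '' B) := by
    refine ⟨1 - c, ?_⟩
    rintro v ⟨q, hq, rfl⟩
    have := hq.1.1
    simp only [ge_iff_le]
    linarith
  apply le_antisymm
  · apply csSup_le hTne
    rintro v ⟨q, hq, rfl⟩
    have : sInf B ≤ q := csInf_le hBbdd hq
    show 1 - q ≤ 1 - sInf B
    linarith
  · rw [Real.le_sSup_iff hTbdd hTne]
    intro ε hε
    have : sInf B < sInf B - ε := by linarith
    obtain ⟨q, hqB, hqlt⟩ := exists_lt_of_csInf_lt hBne this
    exact ⟨1 - q, ⟨q, hqB, rfl⟩, by linarith⟩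
end

section
/- (Claim 2 in the proof of Theorem 1, regime R2.) Suppose θ̄_K < μ°, where μ° is the mean of F. Let {(q_i, μ_i)}_{i∈[K+1]} be an implementable direct mechanism (its posterior-mean CDF H satisfies ∫₀ʸ H ≤ ∫₀ʸ F for all y ∈ [0,M] with equality at y = M) with μ_i ∈ Θ̄_i for each i ∈ [K], μ_{K+1} ≥ μ°, and q_{K+1} > 0. If q_j > 0 for some j < K, then there exists an implementable direct mechanism {(q′_i, μ_i)}_{i∈[K+1]} with the same posterior means μ₁, …, μ_{K+1} and with q′_{K+1} < q_{K+1}; in particular no mechanism with q_j > 0 for some j < K is optimal for minimizing q_{K+1}. -/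
open Set

/-!
Since `μ_j < μ_K < μ_{K+1}`, one can move mass `δ (μ_{K+1} - μ_K)` away from `μ_j` and mass
`δ (μ_K - μ_j)` away from `μ_{K+1}` onto `μ_K`: this keeps the total mass and the mean, and is a
mean-preserving contraction. Because `∫₀ʸ H = Σ qᵢ (y - μᵢ)⁺` and `m ↦ (y - m)⁺` is convex, the
integrated CDF can only decrease, and it is unchanged at `y = M`, where all `(M - μᵢ)⁺` are affine.
So implementability survives while `q_{K+1}` strictly drops.
-/

lemma hasDerivWithinAt_max_sub_const_Ioi (c x : ℝ) :
    HasDerivWithinAt (fun t => max (t - c) 0) (if c ≤ x then 1 else 0) (Ioi x) x := by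
  split_ifs with h
  · refine ((hasDerivAt_id x).sub_const c).hasDerivWithinAt.congr (fun t ht => ?_) ?_
    · exact max_eq_left (by linarith [mem_Ioi.1 ht])
    · exact max_eq_left (by linarith)
  · have hnear : ∀ᶠ t in nhds x, max (t - c) 0 = (0 : ℝ) :=
      Filter.eventually_of_mem (Iio_mem_nhds (not_le.1 h)) fun t ht =>
        max_eq_right (by linarith [mem_Iio.1 ht])
    exact ((hasDerivAt_const x (0 : ℝ)).congr_of_eventuallyEq hnear).hasDerivWithinAt

lemma monotone_ite_le_one_zero (c : ℝ) : Monotone fun t : ℝ => if c ≤ t then (1 : ℝ) else 0 := by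
  intro s t hst
  dsimp only
  split_ifs with hs ht ht
  · rfl
  · exact absurd (hs.trans hst) ht
  · exact zero_le_one
  · rfl

lemma integral_ite_le_one_zero (c a b : ℝ) :
    ∫ t in a..b, (if c ≤ t then (1 : ℝ) else 0) = max (b - c) 0 - max (a - c) 0 :=
  intervalIntegral.integral_eq_sub_of_hasDeriv_right (by fun_prop)
    (fun x _ => hasDerivWithinAt_max_sub_const_Ioi c x)
    (monotone_ite_le_one_zero c).intervalIntegrable

lemma mul_max_sub_zero_le_of_le (x z w y : ℝ) (hxz : x ≤ z) (hzw : z ≤ w) :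
    (w - x) * max (y - z) 0 ≤ (w - z) * max (y - x) 0 + (z - x) * max (y - w) 0 := by
  have hx := mul_le_mul_of_nonneg_left (le_max_left (y - x) 0) (sub_nonneg.2 hzw)
  have hw := mul_le_mul_of_nonneg_left (le_max_left (y - w) 0) (sub_nonneg.2 hxz)
  have hx0 := mul_nonneg (sub_nonneg.2 hzw) (le_max_right (y - x) 0)
  have hw0 := mul_nonneg (sub_nonneg.2 hxz) (le_max_right (y - w) 0)
  rcases le_total y z with hyz | hzy
  · rw [max_eq_right (by linarith), mul_zero]
    linarith
  · rw [max_eq_left (by linarith)]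
    linarith

lemma hi_lt_lo_of_lt {lo hi : ℕ → ℝ} {K : ℕ} (hle : ∀ k ∈ Finset.Icc 1 K, lo k ≤ hi k)
    (hsep : ∀ k, 1 ≤ k → k < K → hi k < lo (k + 1)) {j n : ℕ} (hj : 1 ≤ j) (hjn : j < n)
    (hnK : n ≤ K) : hi j < lo n := by
  induction n, hjn using Nat.le_induction with
  | base => exact hsep j hj hnK
  | succ n hjn ih =>
    have hn := hle n (Finset.mem_Icc.2 ⟨by omega, by omega⟩)
    linarith [ih (by omega), hsep n (by omega) hnK]

section Mechanism

variable {ι : Type*} (s : Finset ι)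

noncomputable def postMeanCDF (q μ : ι → ℝ) (t : ℝ) : ℝ :=
  ∑ i ∈ s, q i * if μ i ≤ t then (1 : ℝ) else 0

def Implementable (F : ℝ → ℝ) (M : ℝ) (q μ : ι → ℝ) : Prop :=
  (∀ y ∈ Icc (0 : ℝ) M, (∫ t in (0 : ℝ)..y, postMeanCDF s q μ t) ≤ ∫ t in (0 : ℝ)..y, F t) ∧
    (∫ t in (0 : ℝ)..M, postMeanCDF s q μ t) = ∫ t in (0 : ℝ)..M, F t

variable {s}

lemma integral_postMeanCDF (q : ι → ℝ) {μ : ι → ℝ} (hμ : ∀ i ∈ s, 0 ≤ μ i) (y : ℝ) :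
    ∫ t in (0 : ℝ)..y, postMeanCDF s q μ t = ∑ i ∈ s, q i * max (y - μ i) 0 := by
  unfold postMeanCDF
  rw [intervalIntegral.integral_finsetSum fun i _ =>
    (monotone_ite_le_one_zero (μ i)).intervalIntegrable.const_mul (q i)]
  refine Finset.sum_congr rfl fun i hi => ?_
  rw [intervalIntegral.integral_const_mul, integral_ite_le_one_zero, zero_sub,
    max_eq_right (neg_nonpos.2 (hμ i hi)), sub_zero]

variable [DecidableEq ι]

/-- Moves mass onto `μ j` from `μ i` and `μ k` in the proportions that keep the mean. -/
def contractionDir (μ : ι → ℝ) (i j k : ι) (l : ι) : ℝ :=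
  (if l = j then μ k - μ i else 0) - (if l = i then μ k - μ j else 0) -
    (if l = k then μ j - μ i else 0)

lemma contractionDir_apply_right (μ : ι → ℝ) {i j k : ι} (hki : k ≠ i) (hkj : k ≠ j) :
    contractionDir μ i j k k = -(μ j - μ i) := by
  simp [contractionDir, hki, hkj]

lemma sum_contractionDir_mul {i j k : ι} (hi : i ∈ s) (hj : j ∈ s) (hk : k ∈ s)
    (μ f : ι → ℝ) :
    ∑ l ∈ s, contractionDir μ i j k l * f l =
      (μ k - μ i) * f j - (μ k - μ j) * f i - (μ j - μ i) * f k := by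
  simp only [contractionDir, sub_mul, ite_mul, zero_mul, Finset.sum_sub_distrib,
    Finset.sum_ite_eq', hi, hj, hk, if_true]

lemma sum_add_smul_contractionDir {i j k : ι} (hi : i ∈ s) (hj : j ∈ s) (hk : k ∈ s)
    (q μ : ι → ℝ) (δ : ℝ) :
    ∑ l ∈ s, (q + δ • contractionDir μ i j k) l = ∑ l ∈ s, q l := by
  have h := sum_contractionDir_mul hi hj hk μ 1
  simp only [Pi.one_apply, mul_one] at h
  simp only [Pi.add_apply, Pi.smul_apply, smul_eq_mul, Finset.sum_add_distrib,
    ← Finset.mul_sum, h]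
  ring

lemma add_smul_contractionDir_nonneg {q μ : ι → ℝ} (hq : ∀ l ∈ s, 0 ≤ q l) {i j k : ι}
    (hij : μ i ≤ μ j) (hjk : μ j ≤ μ k) {δ : ℝ} (hδ : 0 ≤ δ) (hδi : δ * (μ k - μ j) ≤ q i)
    (hδk : δ * (μ j - μ i) ≤ q k) : ∀ l ∈ s, 0 ≤ (q + δ • contractionDir μ i j k) l := by
  intro l hl
  have hql := hq l hl
  have hδj := mul_nonneg hδ (sub_nonneg.2 (hij.trans hjk))
  simp only [Pi.add_apply, Pi.smul_apply, smul_eq_mul, contractionDir]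
  split_ifs <;> subst_vars <;> nlinarith

lemma integral_postMeanCDF_add_smul_contractionDir {μ : ι → ℝ} (hμ : ∀ l ∈ s, 0 ≤ μ l)
    {i j k : ι} (hi : i ∈ s) (hj : j ∈ s) (hk : k ∈ s) (q : ι → ℝ) (δ y : ℝ) :
    ∫ t in (0 : ℝ)..y, postMeanCDF s (q + δ • contractionDir μ i j k) μ t =
      (∫ t in (0 : ℝ)..y, postMeanCDF s q μ t) + δ * ((μ k - μ i) * max (y - μ j) 0 -
        (μ k - μ j) * max (y - μ i) 0 - (μ j - μ i) * max (y - μ k) 0) := by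
  rw [integral_postMeanCDF _ hμ, integral_postMeanCDF _ hμ,
    ← sum_contractionDir_mul hi hj hk μ fun l => max (y - μ l) 0,
    Finset.mul_sum, ← Finset.sum_add_distrib]
  refine Finset.sum_congr rfl fun l _ => ?_
  simp only [Pi.add_apply, Pi.smul_apply, smul_eq_mul]
  ring

theorem Implementable.add_smul_contractionDir {F : ℝ → ℝ} {M : ℝ} {q μ : ι → ℝ}
    (h : Implementable s F M q μ) (hμ : ∀ l ∈ s, μ l ∈ Icc 0 M) {i j k : ι} (hi : i ∈ s)
    (hj : j ∈ s) (hk : k ∈ s) (hij : μ i ≤ μ j) (hjk : μ j ≤ μ k) {δ : ℝ} (hδ : 0 ≤ δ) :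
    Implementable s F M (q + δ • contractionDir μ i j k) μ := by
  have hμ0 : ∀ l ∈ s, 0 ≤ μ l := fun l hl => (hμ l hl).1
  constructor
  · intro y hy
    rw [integral_postMeanCDF_add_smul_contractionDir hμ0 hi hj hk q δ y]
    have hconv := mul_max_sub_zero_le_of_le (μ i) (μ j) (μ k) y hij hjk
    linarith [h.1 y hy, mul_nonneg hδ (sub_nonneg.2 hconv)]
  · rw [integral_postMeanCDF_add_smul_contractionDir hμ0 hi hj hk q δ M,
      max_eq_left (sub_nonneg.2 (hμ i hi).2), max_eq_left (sub_nonneg.2 (hμ j hj).2),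
      max_eq_left (sub_nonneg.2 (hμ k hk).2), ← h.2]
    ring

end Mechanism

theorem regime_R2_claim2_general
    (M : ℝ) (K : ℕ)
    (F : ℝ → ℝ)
    (μ0 : ℝ)
    (lo hi : ℕ → ℝ)
    (hint : ∀ k ∈ Finset.Icc 1 K, 0 ≤ lo k ∧ lo k ≤ hi k ∧ hi k ≤ M)
    (hsep : ∀ k, 1 ≤ k → k < K → hi k < lo (k+1))
    (hregime : hi K < μ0)
    (q μv : ℕ → ℝ)
    (hq_nonneg : ∀ j ∈ Finset.Icc 1 (K+1), 0 ≤ q j)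
    (hq_sum : ∑ j ∈ Finset.Icc 1 (K+1), q j = 1)
    (hμ_range : ∀ j ∈ Finset.Icc 1 (K+1), μv j ∈ Icc (0:ℝ) M)
    (hμ_pref : ∀ i ∈ Finset.Icc 1 K, μv i ∈ Icc (lo i) (hi i))
    (hμ_last : μ0 ≤ μv (K+1))
    (hq_last : 0 < q (K+1))
    (himpl :
      (∀ y ∈ Icc (0:ℝ) M,
        (∫ t in (0:ℝ)..y,
          ∑ j ∈ Finset.Icc 1 (K+1), q j * (if μv j ≤ t then (1:ℝ) else 0)) ≤
          ∫ t in (0:ℝ)..y, F t) ∧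
      (∫ t in (0:ℝ)..M,
        ∑ j ∈ Finset.Icc 1 (K+1), q j * (if μv j ≤ t then (1:ℝ) else 0)) =
        ∫ t in (0:ℝ)..M, F t)
    (j : ℕ) (hj1 : 1 ≤ j) (hjK : j < K) (hqj : 0 < q j) :
    ∃ q' : ℕ → ℝ,
      (∀ i ∈ Finset.Icc 1 (K+1), 0 ≤ q' i) ∧
      (∑ i ∈ Finset.Icc 1 (K+1), q' i = 1) ∧
      ((∀ y ∈ Icc (0:ℝ) M,
          (∫ t in (0:ℝ)..y,
            ∑ i ∈ Finset.Icc 1 (K+1), q' i * (if μv i ≤ t then (1:ℝ) else 0)) ≤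
            ∫ t in (0:ℝ)..y, F t) ∧
        (∫ t in (0:ℝ)..M,
          ∑ i ∈ Finset.Icc 1 (K+1), q' i * (if μv i ≤ t then (1:ℝ) else 0)) =
          ∫ t in (0:ℝ)..M, F t) ∧
      q' (K+1) < q (K+1) := by
  have hj_mem : j ∈ Finset.Icc 1 (K+1) := Finset.mem_Icc.2 ⟨hj1, by omega⟩
  have hK_mem : K ∈ Finset.Icc 1 (K+1) := Finset.mem_Icc.2 ⟨by omega, by omega⟩
  have hK1_mem : K + 1 ∈ Finset.Icc 1 (K+1) := Finset.mem_Icc.2 ⟨by omega, le_rfl⟩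
  have hμj := hμ_pref j (Finset.mem_Icc.2 ⟨hj1, hjK.le⟩)
  have hμK := hμ_pref K (Finset.mem_Icc.2 ⟨by omega, le_rfl⟩)
  have hjK_lt : μv j < μv K := hμj.2.trans_lt
    ((hi_lt_lo_of_lt (fun k hk => (hint k hk).2.1) hsep hj1 hjK le_rfl).trans_le hμK.1)
  have hKK1_lt : μv K < μv (K+1) := by linarith [hμK.2]
  set δ := min (q j / (μv (K+1) - μv K)) (q (K+1) / (μv K - μv j))
  have hδ : 0 < δ := lt_min (div_pos hqj (sub_pos.2 hKK1_lt)) (div_pos hq_last (sub_pos.2 hjK_lt))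
  refine ⟨q + δ • contractionDir μv j K (K+1),
    add_smul_contractionDir_nonneg hq_nonneg hjK_lt.le hKK1_lt.le hδ.le
      ((le_div_iff₀ (sub_pos.2 hKK1_lt)).1 (min_le_left _ _))
      ((le_div_iff₀ (sub_pos.2 hjK_lt)).1 (min_le_right _ _)),
    by rw [sum_add_smul_contractionDir hj_mem hK_mem hK1_mem, hq_sum],
    Implementable.add_smul_contractionDir himpl hμ_range hj_mem hK_mem hK1_mem hjK_lt.le
      hKK1_lt.le hδ.le, ?_⟩
  have hdrop := mul_pos hδ (sub_pos.2 hjK_lt)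
  simp only [Pi.add_apply, Pi.smul_apply, smul_eq_mul,
    contractionDir_apply_right μv (by omega : K + 1 ≠ j) (by omega : K + 1 ≠ K)]
  linarith

/-- Claim 2 in the proof of Theorem 1, regime R2: in regime R2, for an
implementable direct mechanism `{(qᵢ, μᵢ)}_{i∈[K+1]}` with `μᵢ ∈ Θ̄ᵢ` for `i ∈ [K]`,
`μ_{K+1} ≥ μ°` and `q_{K+1} > 0`, if `q_j > 0` for some `j < K`, then there is an
implementable direct mechanism with the same posterior means and a strictly smaller
probability on the last signal. -/
theorem regime_R2_claim2
    (M : ℝ) (hM : 0 < M) (K : ℕ) (hK : 1 ≤ K)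
    (F : ℝ → ℝ) (hF_mono : Monotone F)
    (hF_neg : ∀ t < (0:ℝ), F t = 0) (hF_top : ∀ t ≥ M, F t = 1)
    (μ0 : ℝ) (hμ0 : μ0 = ∫ t in (0:ℝ)..M, (1 - F t))
    (lo hi : ℕ → ℝ)
    (hint : ∀ k ∈ Finset.Icc 1 K, 0 ≤ lo k ∧ lo k ≤ hi k ∧ hi k ≤ M)
    (hsep : ∀ k, 1 ≤ k → k < K → hi k < lo (k+1))
    (hregime : hi K < μ0)
    (q μv : ℕ → ℝ)
    (hq_nonneg : ∀ j ∈ Finset.Icc 1 (K+1), 0 ≤ q j)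
    (hq_sum : ∑ j ∈ Finset.Icc 1 (K+1), q j = 1)
    (hμ_range : ∀ j ∈ Finset.Icc 1 (K+1), μv j ∈ Icc (0:ℝ) M)
    (hμ_pref : ∀ i ∈ Finset.Icc 1 K, μv i ∈ Icc (lo i) (hi i))
    (hμ_last : μ0 ≤ μv (K+1))
    (hq_last : 0 < q (K+1))
    (himpl :
      (∀ y ∈ Icc (0:ℝ) M,
        (∫ t in (0:ℝ)..y,
          ∑ j ∈ Finset.Icc 1 (K+1), q j * (if μv j ≤ t then (1:ℝ) else 0)) ≤
          ∫ t in (0:ℝ)..y, F t) ∧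
      (∫ t in (0:ℝ)..M,
        ∑ j ∈ Finset.Icc 1 (K+1), q j * (if μv j ≤ t then (1:ℝ) else 0)) =
        ∫ t in (0:ℝ)..M, F t)
    (j : ℕ) (hj1 : 1 ≤ j) (hjK : j < K) (hqj : 0 < q j) :
    ∃ q' : ℕ → ℝ,
      (∀ i ∈ Finset.Icc 1 (K+1), 0 ≤ q' i) ∧
      (∑ i ∈ Finset.Icc 1 (K+1), q' i = 1) ∧
      ((∀ y ∈ Icc (0:ℝ) M,
          (∫ t in (0:ℝ)..y,
            ∑ i ∈ Finset.Icc 1 (K+1), q' i * (if μv i ≤ t then (1:ℝ) else 0)) ≤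
            ∫ t in (0:ℝ)..y, F t) ∧
        (∫ t in (0:ℝ)..M,
          ∑ i ∈ Finset.Icc 1 (K+1), q' i * (if μv i ≤ t then (1:ℝ) else 0)) =
          ∫ t in (0:ℝ)..M, F t) ∧
      q' (K+1) < q (K+1) :=
  regime_R2_claim2_general M K F μ0 lo hi hint hsep hregime q μv hq_nonneg hq_sum hμ_range hμ_pref
    hμ_last hq_last himpl j hj1 hjK hqj
end

section
/- (Claim 3 in the proof of Theorem 1, regime R2, with M = 1.) Suppose 0 ≤ θ̄ < μ° ≤ 1, let q₁* := min{ f̄(θ̄), (1 − μ°)/(1 − θ̄) } (so q₁* < 1) and μ₂* := (μ° − q₁*·θ̄)/(1 − q₁*). Then there exists s ∈ [θ̄, μ₂*] such that ∫₀^s F(t) dt = q₁*·(s − θ̄). -/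
open Set MeasureTheory

/-- helper: interval integral monotonicity from a pointwise bound on the open interval. -/
private lemma integral_mono_Ioo {f g : ℝ → ℝ} {a b : ℝ} (hab : a ≤ b)
    (hf : IntervalIntegrable f MeasureTheory.volume a b)
    (hg : IntervalIntegrable g MeasureTheory.volume a b)
    (h : ∀ x ∈ Ioo a b, f x ≤ g x) :
    (∫ x in a..b, f x) ≤ ∫ x in a..b, g x := by
  apply intervalIntegral.integral_mono_ae_restrict hab hf hg
  have ha : ∀ᵐ x ∂(MeasureTheory.volume : MeasureTheory.Measure ℝ), x ≠ a := by
    simpa [MeasureTheory.ae_iff] using measure_singleton a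
  have hb : ∀ᵐ x ∂(MeasureTheory.volume : MeasureTheory.Measure ℝ), x ≠ b := by
    simpa [MeasureTheory.ae_iff] using measure_singleton b
  filter_upwards [MeasureTheory.ae_restrict_mem measurableSet_Icc,
    MeasureTheory.ae_restrict_of_ae ha, MeasureTheory.ae_restrict_of_ae hb] with x hx hxa hxb
  exact h x ⟨lt_of_le_of_ne hx.1 (Ne.symm hxa), lt_of_le_of_ne hx.2 hxb⟩

/-- Young-type inequality for a cdf and its generalized inverse. -/
private lemma young_aux (F Finv : ℝ → ℝ) (hF_meas : Measurable F)
    (hF0 : ∀ t, 0 ≤ F t)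
    (q τ : ℝ) (hq0 : 0 < q) (hτ0 : 0 ≤ τ)
    (hFle : ∀ t, t < τ → F t ≤ q)
    (hFinv_nonneg : ∀ s, s ∈ Ioc 0 q → 0 ≤ Finv s)
    (hFinv_leτ : ∀ s, s ∈ Ioc 0 q → Finv s ≤ τ)
    (hFinv_lt : ∀ s, s ∈ Ioc 0 q → ∀ t, t < Finv s → F t ≤ s)
    (hFinv_int : IntervalIntegrable Finv MeasureTheory.volume 0 q) :
    (∫ s in (0:ℝ)..q, Finv s) ≤ ∫ t in (0:ℝ)..τ, (q - F t) := by
  set μ := MeasureTheory.volume.restrict (Ioc 0 τ) with hμdef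
  set ν := MeasureTheory.volume.restrict (Ioc 0 q) with hνdef
  have hA : MeasurableSet {p : ℝ × ℝ | F p.1 ≤ p.2} :=
    measurableSet_le (hF_meas.comp measurable_fst) measurable_snd
  -- compute ν (Ici c)
  have hν : ∀ c : ℝ, 0 ≤ c → c ≤ q → ν (Ici c) = ENNReal.ofReal (q - c) := by
    intro c hc0 hcq
    rw [hνdef, MeasureTheory.Measure.restrict_apply measurableSet_Ici]
    apply le_antisymm
    · calc MeasureTheory.volume (Ici c ∩ Ioc 0 q)
          ≤ MeasureTheory.volume (Icc c q) := by
            apply measure_mono; intro x hx; exact ⟨hx.1, hx.2.2⟩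
        _ = ENNReal.ofReal (q - c) := Real.volume_Icc
    · calc ENNReal.ofReal (q - c) = MeasureTheory.volume (Ioc c q) := Real.volume_Ioc.symm
        _ ≤ MeasureTheory.volume (Ici c ∩ Ioc 0 q) := by
            apply measure_mono; intro x hx
            exact ⟨hx.1.le, lt_of_le_of_lt hc0 hx.1, hx.2⟩
  have hτne : ∀ᵐ t ∂μ, t ≠ τ := by
    apply MeasureTheory.ae_restrict_of_ae
    simpa [MeasureTheory.ae_iff] using measure_singleton τ
  -- first computation of the product measure of A
  have h1 : (μ.prod ν) {p : ℝ × ℝ | F p.1 ≤ p.2}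
      = ∫⁻ t, ENNReal.ofReal (q - F t) ∂μ := by
    rw [MeasureTheory.Measure.prod_apply hA]
    apply MeasureTheory.lintegral_congr_ae
    filter_upwards [MeasureTheory.ae_restrict_mem measurableSet_Ioc, hτne] with t ht htne
    have hFtq : F t ≤ q := hFle t (lt_of_le_of_ne ht.2 htne)
    have : (Prod.mk t ⁻¹' {p : ℝ × ℝ | F p.1 ≤ p.2}) = Ici (F t) := rfl
    rw [this, hν (F t) (hF0 t) hFtq]
  -- second computation (lower bound)
  have h2 : (∫⁻ s, ENNReal.ofReal (Finv s) ∂ν) ≤ (μ.prod ν) {p : ℝ × ℝ | F p.1 ≤ p.2} := by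
    rw [MeasureTheory.Measure.prod_apply_symm hA]
    apply MeasureTheory.lintegral_mono_ae
    filter_upwards [MeasureTheory.ae_restrict_mem measurableSet_Ioc] with s hs
    have hpre : ((fun x => (x, s)) ⁻¹' {p : ℝ × ℝ | F p.1 ≤ p.2}) = {t | F t ≤ s} := rfl
    rw [hpre, hμdef, MeasureTheory.Measure.restrict_apply' measurableSet_Ioc]
    calc ENNReal.ofReal (Finv s) = MeasureTheory.volume (Ioo 0 (Finv s)) := by
          rw [Real.volume_Ioo, sub_zero]
      _ ≤ MeasureTheory.volume ({t | F t ≤ s} ∩ Ioc 0 τ) := by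
          apply measure_mono; intro t ht
          exact ⟨hFinv_lt s hs t ht.2, ht.1, (ht.2.trans_le (hFinv_leτ s hs)).le⟩
  -- finiteness of the RHS
  have hfin : (∫⁻ t, ENNReal.ofReal (q - F t) ∂μ) < ⊤ := by
    calc (∫⁻ t, ENNReal.ofReal (q - F t) ∂μ) ≤ ∫⁻ _, ENNReal.ofReal q ∂μ := by
          apply MeasureTheory.lintegral_mono
          intro t
          exact ENNReal.ofReal_le_ofReal (by linarith [hF0 t])
      _ = ENNReal.ofReal q * μ univ := by rw [MeasureTheory.lintegral_const]
      _ < ⊤ := by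
          rw [hμdef, MeasureTheory.Measure.restrict_apply_univ, Real.volume_Ioc]
          exact ENNReal.mul_lt_top ENNReal.ofReal_lt_top ENNReal.ofReal_lt_top
  -- convert to real integrals
  have hL : (∫ s in (0:ℝ)..q, Finv s) = (∫⁻ s, ENNReal.ofReal (Finv s) ∂ν).toReal := by
    rw [intervalIntegral.integral_of_le hq0.le]
    apply MeasureTheory.integral_eq_lintegral_of_nonneg_ae
    · filter_upwards [MeasureTheory.ae_restrict_mem measurableSet_Ioc] with s hs
      exact hFinv_nonneg s hs
    · exact hFinv_int.1.aestronglyMeasurable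
  have hR : (∫ t in (0:ℝ)..τ, (q - F t)) = (∫⁻ t, ENNReal.ofReal (q - F t) ∂μ).toReal := by
    rw [intervalIntegral.integral_of_le hτ0]
    apply MeasureTheory.integral_eq_lintegral_of_nonneg_ae
    · filter_upwards [MeasureTheory.ae_restrict_mem measurableSet_Ioc, hτne] with t ht htne
      have := hFle t (lt_of_le_of_ne ht.2 htne)
      simp only [Pi.zero_apply]
      linarith
    · exact (measurable_const.sub hF_meas).aestronglyMeasurable
  rw [hL, hR]
  exact ENNReal.toReal_mono hfin.ne (h2.trans_eq h1)

/-- helper: produce the intermediate-value conclusion. -/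
private lemma finish_aux (F : ℝ → ℝ) (hF_mono : Monotone F) (hF0 : ∀ t, 0 ≤ F t)
    (θbar q1 μ2 s0 : ℝ) (hθ0 : 0 ≤ θbar) (hθs0 : θbar ≤ s0) (hs0 : s0 ≤ μ2)
    (hle : (∫ t in (0:ℝ)..s0, F t) ≤ q1 * (s0 - θbar)) :
    ∃ s ∈ Icc θbar μ2, (∫ t in (0:ℝ)..s, F t) = q1 * (s - θbar) := by
  set G : ℝ → ℝ := fun s => (∫ t in (0:ℝ)..s, F t) - q1 * (s - θbar) with hG
  have hGcont : Continuous G := by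
    apply Continuous.sub
    · exact intervalIntegral.continuous_primitive
        (fun a b => hF_mono.intervalIntegrable) 0
    · exact continuous_const.mul (continuous_id.sub continuous_const)
  have hGθ : 0 ≤ G θbar := by
    have : 0 ≤ ∫ t in (0:ℝ)..θbar, F t :=
      intervalIntegral.integral_nonneg hθ0 (fun u _ => hF0 u)
    simp only [hG]
    linarith
  have hGs0 : G s0 ≤ 0 := by simp only [hG]; linarith
  have := intermediate_value_Icc' hθs0 hGcont.continuousOn
  obtain ⟨s, hs, hGs⟩ := this ⟨hGs0, hGθ⟩
  exact ⟨s, ⟨hs.1, hs.2.trans hs0⟩, by simpa [hG, sub_eq_zero] using hGs⟩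

/-- Claim 3 in the proof of Theorem 1, regime R2, with M = 1: with
`q₁* = min (f̄(θ̄)) ((1 − μ°)/(1 − θ̄))` and `μ₂* = (μ° − q₁*·θ̄)/(1 − q₁*)`, there is
`s ∈ [θ̄, μ₂*]` with `∫₀^s F(t) dt = q₁*·(s − θ̄)`. -/
theorem regime_R2_claim3
    (F Finv : ℝ → ℝ)
    (hF_mono : Monotone F)
    (hF_range : ∀ t, F t ∈ Icc (0:ℝ) 1)
    (hF_neg : ∀ t < (0:ℝ), F t = 0) (hF_top : ∀ t ≥ (1:ℝ), F t = 1)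
    (hFinv : ∀ s, Finv s = sSup {t | F t ≤ s})
    (hFinv_mono : MonotoneOn Finv (Ico 0 1))
    (hFinv_int : IntervalIntegrable Finv MeasureTheory.volume 0 1)
    (μ0 : ℝ) (hμ0 : μ0 = ∫ s in (0:ℝ)..1, Finv s)
    (hμ0' : μ0 = ∫ t in (0:ℝ)..1, (1 - F t))
    (fbar : ℝ → ℝ)
    (hfbar : ∀ θ, fbar θ =
      sSup {x | x ∈ Icc (0:ℝ) 1 ∧ (∫ s in (0:ℝ)..x, Finv s) ≤ x * θ})
    (θbar : ℝ) (hθbar_nonneg : 0 ≤ θbar) (hθbar_lt : θbar < μ0) (hμ0_le : μ0 ≤ 1)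
    (q1 μ2 : ℝ)
    (hq1 : q1 = min (fbar θbar) ((1 - μ0) / (1 - θbar)))
    (hμ2 : μ2 = (μ0 - q1 * θbar) / (1 - q1)) :
    ∃ s ∈ Icc θbar μ2, (∫ t in (0:ℝ)..s, F t) = q1 * (s - θbar) := by
  have hF0 : ∀ t, 0 ≤ F t := fun t => (hF_range t).1
  have hF1 : ∀ t, F t ≤ 1 := fun t => (hF_range t).2
  have hθ1 : θbar < 1 := lt_of_lt_of_le hθbar_lt hμ0_le
  have h1θ : (0:ℝ) < 1 - θbar := by linarith
  have hratio_lt1 : (1 - μ0) / (1 - θbar) < 1 := (div_lt_one h1θ).2 (by linarith)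
  have hratio_nonneg : 0 ≤ (1 - μ0) / (1 - θbar) := div_nonneg (by linarith) h1θ.le
  set Φ : ℝ → ℝ := fun x => ∫ s in (0:ℝ)..x, Finv s with hΦdef
  set K : Set ℝ := {x | x ∈ Icc (0:ℝ) 1 ∧ Φ x ≤ x * θbar} with hKdef
  have hK_bdd : BddAbove K := ⟨1, fun x hx => hx.1.2⟩
  have hK0 : (0:ℝ) ∈ K := ⟨⟨le_refl 0, zero_le_one⟩, by
    simp [hΦdef, intervalIntegral.integral_same]⟩
  have hfbarK : fbar θbar = sSup K := hfbar θbar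
  have hfbar_nonneg : 0 ≤ fbar θbar := by rw [hfbarK]; exact le_csSup hK_bdd hK0
  have hq1_nonneg : 0 ≤ q1 := by rw [hq1]; exact le_min hfbar_nonneg hratio_nonneg
  have hq1_lt1 : q1 < 1 := by
    rw [hq1]; exact lt_of_le_of_lt (min_le_right _ _) hratio_lt1
  have h1q : (0:ℝ) < 1 - q1 := by linarith
  -- integrability of Finv on subintervals of [0,1]
  have hint : ∀ a b : ℝ, 0 ≤ a → a ≤ b → b ≤ 1 →
      IntervalIntegrable Finv MeasureTheory.volume a b := by
    intro a b ha hab hb1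
    apply hFinv_int.mono_set
    rw [uIcc_of_le hab, uIcc_of_le zero_le_one]
    exact Icc_subset_Icc ha hb1
  -- generic facts about Finv
  have hS_ne : ∀ s : ℝ, 0 ≤ s → Set.Nonempty {t | F t ≤ s} := by
    intro s hs
    exact ⟨-1, by rw [Set.mem_setOf_eq, hF_neg (-1) (by norm_num)]; exact hs⟩
  have hS_ub : ∀ s : ℝ, s < 1 → ∀ t ∈ {t | F t ≤ s}, t ≤ 1 := by
    intro s hs t ht
    by_contra hc
    push_neg at hc
    rw [Set.mem_setOf_eq, hF_top t hc.le] at ht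
    linarith
  have hFinv_le_one : ∀ s : ℝ, s < 1 → Finv s ≤ 1 := by
    intro s hs
    rcases le_or_gt 0 s with h0 | h0
    · rw [hFinv]; exact csSup_le (hS_ne s h0) (hS_ub s hs)
    · rw [hFinv]
      have hempty : {t | F t ≤ s} = ∅ := by
        ext t
        simp only [Set.mem_setOf_eq, Set.mem_empty_iff_false, iff_false, not_le]
        exact lt_of_lt_of_le h0 (hF0 t)
      rw [hempty, Real.sSup_empty]
      norm_num
  have hFinv_nonneg : ∀ s : ℝ, 0 ≤ s → s < 1 → 0 ≤ Finv s := by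
    intro s hs hs1
    by_contra h
    push_neg at h
    have hmem : Finv s / 2 ∈ {t | F t ≤ s} := by
      rw [Set.mem_setOf_eq, hF_neg _ (by linarith)]; exact hs
    have := le_csSup ⟨1, hS_ub s hs1⟩ hmem
    rw [← hFinv] at this
    linarith
  have hF_le_of_lt : ∀ s : ℝ, 0 ≤ s → ∀ t, t < Finv s → F t ≤ s := by
    intro s hs t ht
    rw [hFinv] at ht
    obtain ⟨u, huS, htu⟩ := exists_lt_of_lt_csSup (hS_ne s hs) ht
    exact (hF_mono htu.le).trans huS
  -- case split on the min
  rcases le_total ((1 - μ0) / (1 - θbar)) (fbar θbar) with hc | hc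
  · -- q1 = (1-μ0)/(1-θbar), μ2 = 1, s₀ = 1
    have hq1r : q1 = (1 - μ0) / (1 - θbar) := by rw [hq1]; exact min_eq_right hc
    have hq1mul : q1 * (1 - θbar) = 1 - μ0 := by
      rw [hq1r]; field_simp
    have hμ2_1 : μ2 = 1 := by
      rw [hμ2, div_eq_one_iff_eq h1q.ne']
      linarith
    have hintF1 : (∫ t in (0:ℝ)..1, F t) = 1 - μ0 := by
      have hsub : (∫ t in (0:ℝ)..1, (1 - F t))
          = (∫ t in (0:ℝ)..1, (1:ℝ)) - ∫ t in (0:ℝ)..1, F t :=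
        intervalIntegral.integral_sub intervalIntegrable_const hF_mono.intervalIntegrable
      rw [← hμ0'] at hsub
      simp only [intervalIntegral.integral_const, smul_eq_mul, sub_zero, mul_one] at hsub
      linarith
    rw [hμ2_1]
    apply finish_aux F hF_mono hF0 θbar q1 1 1 hθbar_nonneg hθ1.le le_rfl
    rw [hintF1]
    linarith
  · -- q1 = fbar θbar
    have hq1f : q1 = fbar θbar := by rw [hq1]; exact min_eq_left hc
    -- points above q1 are not in K
    have hnotK : ∀ x, q1 < x → x ≤ 1 → x * θbar < Φ x := by
      intro x hx hx1
      by_contra h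
      push_neg at h
      have hxK : x ∈ K := ⟨⟨le_trans hq1_nonneg hx.le, hx1⟩, h⟩
      have := le_csSup hK_bdd hxK
      rw [← hfbarK, ← hq1f] at this
      linarith
    -- lower bound on Φ q1
    have hΦq : θbar * q1 ≤ Φ q1 := by
      by_contra h
      push_neg at h
      set δ : ℝ := θbar * q1 - Φ q1 with hδdef
      have hδpos : 0 < δ := by simp only [hδdef]; linarith
      set ε : ℝ := min ((δ / 2) / (1 - θbar)) (1 - q1) with hεdef
      have hεpos : 0 < ε := lt_min (div_pos (by linarith) h1θ) h1q
      have hε1 : q1 + ε ≤ 1 := by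
        have := min_le_right ((δ / 2) / (1 - θbar)) (1 - q1)
        simp only [hεdef]
        linarith
      have h1 := hnotK (q1 + ε) (by linarith) hε1
      have hadj : Φ q1 + (∫ s in q1..(q1 + ε), Finv s) = Φ (q1 + ε) :=
        intervalIntegral.integral_add_adjacent_intervals
          (hint 0 q1 le_rfl hq1_nonneg (by linarith))
          (hint q1 (q1 + ε) hq1_nonneg (by linarith) hε1)
      have hbound : (∫ s in q1..(q1 + ε), Finv s) ≤ ∫ s in q1..(q1 + ε), (1:ℝ) := by
        apply integral_mono_Ioo (by linarith)
          (hint q1 (q1 + ε) hq1_nonneg (by linarith) hε1) intervalIntegrable_const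
        intro s hs
        exact hFinv_le_one s (by cases hs; linarith)
      simp only [intervalIntegral.integral_const, smul_eq_mul, mul_one,
        add_sub_cancel_left] at hbound
      have hεθ : ε * (1 - θbar) ≤ δ / 2 := by
        have h2 := min_le_left ((δ / 2) / (1 - θbar)) (1 - q1)
        calc ε * (1 - θbar) ≤ ((δ / 2) / (1 - θbar)) * (1 - θbar) := by
              apply mul_le_mul_of_nonneg_right _ h1θ.le
              simpa [hεdef] using h2
          _ = δ / 2 := by field_simp
      nlinarith
    -- subcase on q1 = 0 or q1 > 0
    rcases eq_or_lt_of_le hq1_nonneg with hq10 | hq1pos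
    · -- q1 = 0 : F vanishes on [0, θbar]
      have hFzero : ∀ t ∈ Icc (0:ℝ) θbar, F t = 0 := by
        intro t ht
        have hΦFt : Φ (F t) ≤ F t * t := by
          have : (∫ s in (0:ℝ)..(F t), Finv s) ≤ ∫ s in (0:ℝ)..(F t), t := by
            apply integral_mono_Ioo (hF0 t) (hint 0 (F t) le_rfl (hF0 t) (hF1 t))
              intervalIntegrable_const
            intro s hs
            rw [hFinv]
            apply csSup_le (hS_ne s hs.1.le)
            intro u hu
            by_contra hcu
            push_neg at hcu
            have := (hF_mono hcu.le).trans hu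
            have hsFt := hs.2
            linarith
          simpa [hΦdef, smul_eq_mul, mul_comm] using this
        have hFtK : F t ∈ K :=
          ⟨hF_range t, hΦFt.trans (mul_le_mul_of_nonneg_left ht.2 (hF0 t))⟩
        have h1 := le_csSup hK_bdd hFtK
        rw [← hfbarK, ← hq1f, ← hq10] at h1
        exact le_antisymm h1 (hF0 t)
      have hzero : (∫ t in (0:ℝ)..θbar, F t) = 0 := by
        rw [intervalIntegral.integral_congr (g := fun _ => (0:ℝ))
          (fun t ht => hFzero t (by rwa [uIcc_of_le hθbar_nonneg] at ht))]
        simp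
      have hθμ2 : θbar ≤ μ2 := by
        rw [hμ2, ← hq10]
        simp only [zero_mul, sub_zero, div_one]
        exact hθbar_lt.le
      apply finish_aux F hF_mono hF0 θbar q1 μ2 θbar hθbar_nonneg le_rfl hθμ2
      rw [hzero]
      simp
    · -- q1 > 0 : use t₁ = Finv q1 and the Young inequality
      set t₁ : ℝ := Finv q1 with ht₁def
      have ht₁0 : 0 ≤ t₁ := hFinv_nonneg q1 hq1_nonneg hq1_lt1
      have ht₁1 : t₁ ≤ 1 := hFinv_le_one q1 hq1_lt1
      have hFle_t₁ : ∀ t, t < t₁ → F t ≤ q1 := hF_le_of_lt q1 hq1_nonneg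
      have hΦq_le : Φ q1 ≤ q1 * t₁ := by
        have : (∫ s in (0:ℝ)..q1, Finv s) ≤ ∫ s in (0:ℝ)..q1, t₁ := by
          apply integral_mono_Ioo hq1_nonneg (hint 0 q1 le_rfl hq1_nonneg hq1_lt1.le)
            intervalIntegrable_const
          intro s hs
          exact hFinv_mono ⟨hs.1.le, hs.2.trans hq1_lt1⟩ ⟨hq1_nonneg, hq1_lt1⟩ hs.2.le
        simpa [hΦdef, smul_eq_mul, mul_comm] using this
      have hθt₁ : θbar ≤ t₁ := by
        have h2 : θbar * q1 ≤ q1 * t₁ := hΦq.trans hΦq_le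
        rw [mul_comm θbar q1] at h2
        exact le_of_mul_le_mul_left h2 hq1pos
      have ht₁μ2 : t₁ ≤ μ2 := by
        have hadj : Φ q1 + (∫ s in q1..(1:ℝ), Finv s) = Φ 1 :=
          intervalIntegral.integral_add_adjacent_intervals
            (hint 0 q1 le_rfl hq1_nonneg hq1_lt1.le)
            (hint q1 1 hq1_nonneg hq1_lt1.le le_rfl)
        have hlow : (1 - q1) * t₁ ≤ ∫ s in q1..(1:ℝ), Finv s := by
          have : (∫ s in q1..(1:ℝ), t₁) ≤ ∫ s in q1..(1:ℝ), Finv s := by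
            apply integral_mono_Ioo hq1_lt1.le intervalIntegrable_const
              (hint q1 1 hq1_nonneg hq1_lt1.le le_rfl)
            intro s hs
            exact hFinv_mono ⟨hq1_nonneg, hq1_lt1⟩
              ⟨hq1_nonneg.trans hs.1.le, hs.2⟩ hs.1.le
          simpa [smul_eq_mul] using this
        have hμ0Φ : Φ 1 = μ0 := hμ0.symm
        rw [hμ2, le_div_iff₀ h1q]
        nlinarith
      have hyoung : Φ q1 ≤ ∫ t in (0:ℝ)..t₁, (q1 - F t) := by
        apply young_aux F Finv hF_mono.measurable hF0 q1 t₁ hq1pos ht₁0 hFle_t₁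
        · intro s hs; exact hFinv_nonneg s hs.1.le (hs.2.trans_lt hq1_lt1)
        · intro s hs
          exact hFinv_mono ⟨hs.1.le, hs.2.trans_lt hq1_lt1⟩ ⟨hq1_nonneg, hq1_lt1⟩ hs.2
        · intro s hs t ht; exact hF_le_of_lt s hs.1.le t ht
        · exact hint 0 q1 le_rfl hq1_nonneg hq1_lt1.le
      have hsub : (∫ t in (0:ℝ)..t₁, (q1 - F t))
          = (∫ t in (0:ℝ)..t₁, (q1:ℝ)) - ∫ t in (0:ℝ)..t₁, F t :=
        intervalIntegral.integral_sub intervalIntegrable_const hF_mono.intervalIntegrable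
      simp only [intervalIntegral.integral_const, smul_eq_mul, sub_zero] at hsub
      apply finish_aux F hF_mono hF0 θbar q1 μ2 t₁ hθbar_nonneg hθt₁ ht₁μ2
      rw [hsub] at hyoung
      nlinarith
end

section
/- (Proposition for regime R4a.) Let ν be a probability measure on [0,M] and t ∈ (0,M) with 0 < F(t) < 1, where F(t) := ν([0,t]). Set s̲ := (1/F(t))·∫_{[0,t]} θ dν(θ) and s̄ := (1/(1−F(t)))·∫_{(t,M]} θ dν(θ), and for θ ∈ (s̲, s̄) define p(t,θ) := ((1−F(t))·(s̄ − θ))/(F(t)·(θ − s̲)). Let θ′, θ″ ∈ (s̲, s̄) and δ ∈ [0,1] be such that λ := δ·p(t,θ′) ∈ [0,1] and δ·p(t,θ′) + (1−δ)·p(t,θ″) = 1. Consider the two-signal mechanism with z_θ(1) = λ for θ ∈ [0,t] and z_θ(1) = δ for θ ∈ (t,M], and z_θ(2) = 1 − z_θ(1). Then: (a) signal probabilities are q₁ = λ·F(t) + δ·(1−F(t)) and q₂ = 1 − q₁; (b) if q₁ > 0, the posterior mean of signal 1 equals θ′, i.e. ∫ θ·z_θ(1) dν(θ) = θ′·q₁;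 (c) if q₂ > 0, the posterior mean of signal 2 equals θ″, i.e. ∫ θ·z_θ(2) dν(θ) = θ″·q₂. Consequently, if θ′ and θ″ both lie in the planner's preferred subset of [0,M], the planner's objective q₁·1{μ₁ ∈ preferred set} + q₂·1{μ₂ ∈ preferred set} equals 1. -/
/-!
The signal probability `z` is a step function with its jump at `t`, so every integral against it
splits into the contributions of `[0,t]` and `(t,M]`, which are `F(t)·s̲` and `(1 − F(t))·s̄`
for the identity. The posterior mean of a signal sent with probabilities `w₀` on `[0,t]` and `w₁`
on `(t,M]` is `θ` as soon as `w₀ = w₁·p(t,θ)`; this holds for signal 1 with `θ′` by the choice of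
`λ`, and for signal 2 with `θ″` because `δ·p(t,θ′) + (1−δ)·p(t,θ″) = 1` says
`1 − λ = (1 − δ)·p(t,θ″)`.
-/

open Set MeasureTheory

section StepFunction

variable {α : Type*} [MeasurableSpace α] {μ : Measure α} {s : Set α}

theorem integral_mul_ite_mem [DecidablePred (· ∈ s)] (hs : MeasurableSet s) {f : α → ℝ}
    (hf : Integrable f μ) (a b : ℝ) :
    ∫ x, f x * (if x ∈ s then a else b) ∂μ
      = a * ∫ x in s, f x ∂μ + b * ∫ x in sᶜ, f x ∂μ := by
  have hpiece : (fun x => f x * if x ∈ s then a else b)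
      = s.piecewise (fun x => a * f x) (fun x => b * f x) := by
    ext x
    by_cases hx : x ∈ s <;> simp [hx, mul_comm]
  rw [hpiece, integral_piecewise hs (hf.const_mul a).integrableOn (hf.const_mul b).integrableOn,
    integral_const_mul, integral_const_mul]

theorem integral_ite_mem [IsFiniteMeasure μ] [DecidablePred (· ∈ s)] (hs : MeasurableSet s)
    (a b : ℝ) :
    ∫ x, (if x ∈ s then a else b) ∂μ = a * μ.real s + b * μ.real sᶜ := by
  simpa using integral_mul_ite_mem (μ := μ) hs (integrable_const 1) a b

end StepFunction

section Support

variable {μ : Measure ℝ} {a b : ℝ}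

theorem Iic_ae_eq_Icc_of_ae_le (h : ∀ᵐ x ∂μ, a ≤ x) (t : ℝ) :
    (Iic t : Set ℝ) =ᵐ[μ] Icc a t := by
  filter_upwards [h] with x hx
  exact propext ⟨fun hxt => ⟨hx, hxt⟩, And.right⟩

theorem Ioi_ae_eq_Ioc_of_ae_le (h : ∀ᵐ x ∂μ, x ≤ b) (t : ℝ) :
    (Ioi t : Set ℝ) =ᵐ[μ] Ioc t b := by
  filter_upwards [h] with x hx
  exact propext ⟨fun hxt => ⟨hxt, hx⟩, And.left⟩

theorem integrable_id_of_ae_mem_Icc [IsFiniteMeasure μ] (h : ∀ᵐ x ∂μ, x ∈ Icc a b) :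
    Integrable id μ := by
  rw [← Measure.restrict_eq_self_of_ae_mem h]
  exact continuous_id.integrableOn_Icc

theorem integral_ite_le_of_ae_le [IsProbabilityMeasure μ] (h : ∀ᵐ x ∂μ, a ≤ x) (t u v : ℝ) :
    ∫ x, (if x ≤ t then u else v) ∂μ = u * μ.real (Icc a t) + v * (1 - μ.real (Icc a t)) := by
  have hsplit := integral_ite_mem (μ := μ) (measurableSet_Iic (a := t)) u v
  simp only [mem_Iic] at hsplit
  rw [hsplit, probReal_compl_eq_one_sub measurableSet_Iic,
    measureReal_congr (Iic_ae_eq_Icc_of_ae_le h t)]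

theorem integral_mul_ite_le_of_ae_mem_Icc [IsFiniteMeasure μ] (h : ∀ᵐ x ∂μ, x ∈ Icc a b)
    (t u v : ℝ) :
    ∫ x, x * (if x ≤ t then u else v) ∂μ
      = u * ∫ x in Icc a t, x ∂μ + v * ∫ x in Ioc t b, x ∂μ := by
  have hsplit := integral_mul_ite_mem (μ := μ) (f := fun x => x) (measurableSet_Iic (a := t))
    (integrable_id_of_ae_mem_Icc h) u v
  simp only [mem_Iic, compl_Iic] at hsplit
  rw [hsplit, setIntegral_congr_set (Iic_ae_eq_Icc_of_ae_le (h.mono fun _ hx => hx.1) t),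
    setIntegral_congr_set (Ioi_ae_eq_Ioc_of_ae_le (h.mono fun _ hx => hx.2) t)]

end Support

theorem mixture_mean_eq_of_eq_mul_ratio {F slo shi θ w₀ w₁ : ℝ} (hF : F ≠ 0) (hθ : θ ≠ slo)
    (hw : w₀ = w₁ * ((1 - F) * (shi - θ) / (F * (θ - slo)))) :
    w₀ * (slo * F) + w₁ * (shi * (1 - F)) = θ * (w₀ * F + w₁ * (1 - F)) := by
  have hθ' : θ - slo ≠ 0 := sub_ne_zero.2 hθ
  rw [hw]
  field_simp
  ring

theorem regime_R4a_mechanism_general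
    (M : ℝ) (ν : Measure ℝ) [IsProbabilityMeasure ν]
    (hsupp : ν (Icc (0:ℝ) M)ᶜ = 0)
    (t : ℝ)
    (Ft : ℝ) (hFt : Ft = (ν (Icc (0:ℝ) t)).toReal)
    (hFt_pos : 0 < Ft) (hFt_lt : Ft < 1)
    (slo shi : ℝ)
    (hslo : slo = (1 / Ft) * ∫ θ in Icc (0:ℝ) t, θ ∂ν)
    (hshi : shi = (1 / (1 - Ft)) * ∫ θ in Ioc t M, θ ∂ν)
    (p : ℝ → ℝ)
    (hp : ∀ θ, p θ = ((1 - Ft) * (shi - θ)) / (Ft * (θ - slo)))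
    (θ' θ'' : ℝ) (hθ' : θ' ∈ Ioo slo shi) (hθ'' : θ'' ∈ Ioo slo shi)
    (δ lam : ℝ)
    (hlam : lam = δ * p θ')
    (hcomb : δ * p θ' + (1 - δ) * p θ'' = 1)
    (z : ℝ → ℝ) (hz : ∀ θ, z θ = if θ ≤ t then lam else δ)
    (q1 q2 : ℝ) (hq1 : q1 = lam * Ft + δ * (1 - Ft)) (hq2 : q2 = 1 - q1) :
    (∫ θ, z θ ∂ν) = q1 ∧
    (0 < q1 → (∫ θ, θ * z θ ∂ν) = θ' * q1) ∧
    (0 < q2 → (∫ θ, θ * (1 - z θ) ∂ν) = θ'' * q2) ∧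
    (∀ S : Set ℝ, S ⊆ Icc (0:ℝ) M → θ' ∈ S → θ'' ∈ S →
      q1 * S.indicator (fun _ => (1:ℝ)) θ' + q2 * S.indicator (fun _ => (1:ℝ)) θ'' = 1) := by
  have hae : ∀ᵐ θ ∂ν, θ ∈ Icc (0:ℝ) M := ae_iff.2 hsupp
  have hlo : ∫ θ in Icc 0 t, θ ∂ν = slo * Ft := by rw [hslo]; field_simp
  have hhi : ∫ θ in Ioc t M, θ ∂ν = shi * (1 - Ft) := by
    rw [hshi]; field_simp [(by linarith : 1 - Ft ≠ 0)]
  have hz₂ : ∀ θ, 1 - z θ = if θ ≤ t then 1 - lam else 1 - δ := fun θ => by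
    rw [hz]; split_ifs <;> rfl
  refine ⟨?_, fun _ => ?_, fun _ => ?_, fun S _ h' h'' => ?_⟩
  · simp_rw [hz]
    rw [integral_ite_le_of_ae_le (hae.mono fun _ h => h.1), measureReal_def, ← hFt, hq1]
  · simp_rw [hz]
    rw [integral_mul_ite_le_of_ae_mem_Icc hae, hlo, hhi, hq1]
    exact mixture_mean_eq_of_eq_mul_ratio hFt_pos.ne' hθ'.1.ne' (hlam.trans (by rw [hp]))
  · have h1lam : 1 - lam = (1 - δ) * p θ'' := by rw [hlam]; linarith
    simp_rw [hz₂]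
    rw [integral_mul_ite_le_of_ae_mem_Icc hae, hlo, hhi, hq2, hq1]
    convert mixture_mean_eq_of_eq_mul_ratio hFt_pos.ne' hθ''.1.ne' (h1lam.trans (by rw [hp]))
      using 2
    ring
  · rw [indicator_of_mem h', indicator_of_mem h'', hq2]
    ring

/-- Proposition for regime R4a: the two-signal mechanism sending signal 1
with probability `λ` on `[0,t]` and `δ` on `(t,M]` has signal probabilities
`q₁ = λ·F(t) + δ·(1−F(t))`, `q₂ = 1 − q₁`, posterior means `θ′` and `θ″`, and hence
attains planner objective `1` whenever `θ′, θ″` lie in the preferred set. -/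
theorem regime_R4a_mechanism
    (M : ℝ) (hM : 0 < M) (ν : Measure ℝ) [IsProbabilityMeasure ν]
    (hsupp : ν (Icc (0:ℝ) M)ᶜ = 0)
    (t : ℝ) (ht : t ∈ Ioo (0:ℝ) M)
    (Ft : ℝ) (hFt : Ft = (ν (Icc (0:ℝ) t)).toReal)
    (hFt_pos : 0 < Ft) (hFt_lt : Ft < 1)
    (slo shi : ℝ)
    (hslo : slo = (1 / Ft) * ∫ θ in Icc (0:ℝ) t, θ ∂ν)
    (hshi : shi = (1 / (1 - Ft)) * ∫ θ in Ioc t M, θ ∂ν)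
    (p : ℝ → ℝ)
    (hp : ∀ θ, p θ = ((1 - Ft) * (shi - θ)) / (Ft * (θ - slo)))
    (θ' θ'' : ℝ) (hθ' : θ' ∈ Ioo slo shi) (hθ'' : θ'' ∈ Ioo slo shi)
    (δ lam : ℝ) (hδ : δ ∈ Icc (0:ℝ) 1)
    (hlam : lam = δ * p θ') (hlam01 : lam ∈ Icc (0:ℝ) 1)
    (hcomb : δ * p θ' + (1 - δ) * p θ'' = 1)
    (z : ℝ → ℝ) (hz : ∀ θ, z θ = if θ ≤ t then lam else δ)
    (q1 q2 : ℝ) (hq1 : q1 = lam * Ft + δ * (1 - Ft)) (hq2 : q2 = 1 - q1) :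
    (∫ θ, z θ ∂ν) = q1 ∧
    (0 < q1 → (∫ θ, θ * z θ ∂ν) = θ' * q1) ∧
    (0 < q2 → (∫ θ, θ * (1 - z θ) ∂ν) = θ'' * q2) ∧
    (∀ S : Set ℝ, S ⊆ Icc (0:ℝ) M → θ' ∈ S → θ'' ∈ S →
      q1 * S.indicator (fun _ => (1:ℝ)) θ' + q2 * S.indicator (fun _ => (1:ℝ)) θ'' = 1) :=
  regime_R4a_mechanism_general M ν hsupp t Ft hFt hFt_pos hFt_lt slo shi hslo hshi p hp θ' θ'' hθ'
    hθ'' δ lam hlam hcomb z hz q1 q2 hq1 hq2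
end

section
/- (Signal reduction for the discretized problem, from Lemma on the LP-based design.) Let F_δ be a probability distribution with finite support {ν₁, …, ν_N} ⊂ [0,M] and masses p_j, let 0 = y₀ < y₁ < ⋯ < y_K = 1 be a grid, and let h satisfy h(y; ν_j) = c_{j,k} for all y ∈ [y_{k−1}, y_k), k ∈ [K], and h(1; ν_j) = c_{j,K}. Then for every signaling mechanism π for F_δ with finite signal set, there exists a signaling mechanism π′ for F_δ with signal set {1, …, K} such that: for every signal i ∈ [K] with q′_i > 0, the induced equilibrium mass satisfies m(μ′_i) ∈ [y_{i−1}, y_i) (respectively m(μ′_K) ∈ [y_{K−1}, 1] for i = K), and the planner's expected utility of π′, namely Σ_j Σ_i p_j·z′_{ν_j}(i)·h(m(μ′_i); ν_j), is at least that of π. -/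
open Set


/-- There is a grid cell containing any `t ∈ [0,1)`. -/
lemma exists_cell_aux (K : ℕ) (hK : 1 ≤ K) (y : ℕ → ℝ) (hy0 : y 0 = 0) (hyK : y K = 1)
    (hy_mono : ∀ k < K, y k < y (k+1)) (t : ℝ) (ht0 : 0 ≤ t) (ht1 : t < 1) :
    ∃ k ∈ Finset.Icc 1 K, t ∈ Ico (y (k-1)) (y k) := by
  classical
  set S : Finset ℕ := (Finset.range (K+1)).filter (fun k => y k ≤ t) with hS
  have h0 : (0:ℕ) ∈ S := by
    simp [hS, hy0, ht0]
  have hSne : S.Nonempty := ⟨0, h0⟩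
  set k0 := S.max' hSne with hk0
  have hk0S : k0 ∈ S := S.max'_mem hSne
  have hk0le : y k0 ≤ t := (Finset.mem_filter.mp hk0S).2
  have hk0rng : k0 < K + 1 := Finset.mem_range.mp (Finset.mem_filter.mp hk0S).1
  have hk0neK : k0 ≠ K := by
    intro hEq
    rw [hEq, hyK] at hk0le
    linarith
  have hk0K : k0 < K := by omega
  have hlt : t < y (k0 + 1) := by
    by_contra hle
    push_neg at hle
    have : k0 + 1 ∈ S := by
      refine Finset.mem_filter.mpr ⟨Finset.mem_range.mpr (by omega), hle⟩
    have := S.le_max' _ this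
    omega
  exact ⟨k0 + 1, Finset.mem_Icc.mpr ⟨by omega, by omega⟩, by simpa using ⟨hk0le, hlt⟩⟩

/-- A weighted average lies between some positively-weighted values. -/
lemma exists_avg_bounds {ι : Type*} (S : Finset ι) (w v : ι → ℝ)
    (hw : ∀ i ∈ S, 0 ≤ w i) (hpos : 0 < ∑ i ∈ S, w i) :
    ∃ a ∈ S, ∃ b ∈ S, 0 < w a ∧ 0 < w b ∧
      v a ≤ (∑ i ∈ S, w i * v i) / (∑ i ∈ S, w i) ∧
      (∑ i ∈ S, w i * v i) / (∑ i ∈ S, w i) ≤ v b := by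
  classical
  set T : Finset ι := S.filter (fun i => 0 < w i) with hT
  have hTne : T.Nonempty := by
    by_contra hne
    rw [Finset.not_nonempty_iff_eq_empty] at hne
    have : ∀ i ∈ S, w i = 0 := by
      intro i hi
      by_contra hwi
      have : i ∈ T := Finset.mem_filter.mpr ⟨hi, lt_of_le_of_ne (hw i hi) (Ne.symm hwi)⟩
      simp [hne] at this
    rw [Finset.sum_congr rfl this] at hpos
    simp at hpos
  obtain ⟨a, haT, ha⟩ := T.exists_min_image v hTne
  obtain ⟨b, hbT, hb⟩ := T.exists_max_image v hTne
  have haS := (Finset.mem_filter.mp haT).1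
  have hbS := (Finset.mem_filter.mp hbT).1
  have hwa := (Finset.mem_filter.mp haT).2
  have hwb := (Finset.mem_filter.mp hbT).2
  refine ⟨a, haS, b, hbS, hwa, hwb, ?_, ?_⟩
  · rw [le_div_iff₀ hpos, mul_comm, Finset.sum_mul]
    apply Finset.sum_le_sum
    intro i hi
    by_cases hwi : 0 < w i
    · exact mul_le_mul_of_nonneg_left (ha i (Finset.mem_filter.mpr ⟨hi, hwi⟩)) (le_of_lt hwi)
    · have : w i = 0 := le_antisymm (not_lt.mp hwi) (hw i hi)
      simp [this]
  · rw [div_le_iff₀ hpos, mul_comm, Finset.sum_mul]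
    apply Finset.sum_le_sum
    intro i hi
    by_cases hwi : 0 < w i
    · exact mul_le_mul_of_nonneg_left (hb i (Finset.mem_filter.mpr ⟨hi, hwi⟩)) (le_of_lt hwi)
    · have : w i = 0 := le_antisymm (not_lt.mp hwi) (hw i hi)
      simp [this]



/-- The `k`-th grid cell (last cell closed at 1). -/
def cellT (K : ℕ) (y : ℕ → ℝ) (k : ℕ) : Set ℝ :=
  if k = K then Icc (y (K-1)) 1 else Ico (y (k-1)) (y k)

lemma cellT_conv (K : ℕ) (y : ℕ → ℝ) (k : ℕ) {a b t : ℝ}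
    (ha : a ∈ cellT K y k) (hb : b ∈ cellT K y k) (hat : a ≤ t) (htb : t ≤ b) :
    t ∈ cellT K y k := by
  by_cases hk : k = K
  · simp only [cellT, if_pos hk] at *
    exact ⟨ha.1.trans hat, htb.trans hb.2⟩
  · simp only [cellT, if_neg hk] at *
    exact ⟨ha.1.trans hat, lt_of_le_of_lt htb hb.2⟩

lemma cellT_eval (K : ℕ) (y : ℕ → ℝ) (hyK : y K = 1)
    (f : ℝ → ℝ) (d : ℕ → ℝ)
    (hstep : ∀ k ∈ Finset.Icc 1 K, ∀ x ∈ Ico (y (k-1)) (y k), f x = d k)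
    (htop : f 1 = d K) :
    ∀ k ∈ Finset.Icc 1 K, ∀ t ∈ cellT K y k, f t = d k := by
  intro k hk t ht
  by_cases hkK : k = K
  · have ht' : t ∈ Icc (y (K-1)) 1 := by simpa only [cellT, if_pos hkK] using ht
    rcases lt_or_eq_of_le ht'.2 with hlt | heq
    · rw [hkK]
      exact hstep K (by rw [hkK] at hk; exact hk) t ⟨ht'.1, by rw [hyK]; exact hlt⟩
    · rw [heq, hkK]; exact htop
  · simp only [cellT, if_neg hkK] at ht
    exact hstep k hk t ht

/-- Signal reduction for the discretized problem: for a distribution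
with finite support `{ν₁,…,ν_N}` and a planner utility that is piecewise constant
(equal to `c_{j,k}` on the grid cell `[y_{k−1}, y_k)`, with the last cell closed),
every finite-signal mechanism can be replaced by a mechanism with signal set `[K]`
whose `i`-th induced equilibrium mass lies in the `i`-th grid cell (when the signal
has positive probability) and whose expected utility is at least as large. -/
theorem discrete_signal_reduction
    {ι : Type*} [Fintype ι]
    (M : ℝ) (hM : 0 < M) (N K : ℕ) (hN : 1 ≤ N) (hK : 1 ≤ K)
    (νv p : ℕ → ℝ)
    (hνv : ∀ j ∈ Finset.Icc 1 N, νv j ∈ Icc (0:ℝ) M)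
    (hp_nonneg : ∀ j ∈ Finset.Icc 1 N, 0 ≤ p j)
    (hp_sum : ∑ j ∈ Finset.Icc 1 N, p j = 1)
    (y : ℕ → ℝ) (hy0 : y 0 = 0) (hyK : y K = 1)
    (hy_mono : ∀ k < K, y k < y (k+1))
    (m : ℝ → ℝ)
    (hm_mono : MonotoneOn m (Ici 0))
    (hm_cont : ContinuousOn m (Ici 0))
    (hm_range : ∀ μ ∈ Ici (0:ℝ), m μ ∈ Icc (0:ℝ) 1)
    (h : ℝ → ℝ → ℝ) (c : ℕ → ℕ → ℝ)
    (hstep : ∀ j ∈ Finset.Icc 1 N, ∀ k ∈ Finset.Icc 1 K,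
      ∀ x ∈ Ico (y (k-1)) (y k), h x (νv j) = c j k)
    (hstep_top : ∀ j ∈ Finset.Icc 1 N, h 1 (νv j) = c j K)
    (z : ℕ → ι → ℝ)
    (hz_nonneg : ∀ j ∈ Finset.Icc 1 N, ∀ i, 0 ≤ z j i)
    (hz_sum : ∀ j ∈ Finset.Icc 1 N, ∑ i, z j i = 1) :
    ∃ z' : ℕ → ℕ → ℝ,
      (∀ j ∈ Finset.Icc 1 N, ∀ i ∈ Finset.Icc 1 K, 0 ≤ z' j i) ∧
      (∀ j ∈ Finset.Icc 1 N, ∑ i ∈ Finset.Icc 1 K, z' j i = 1) ∧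
      (∀ i ∈ Finset.Icc 1 K,
        0 < ∑ j ∈ Finset.Icc 1 N, p j * z' j i →
        ((i < K →
            m ((∑ j ∈ Finset.Icc 1 N, νv j * p j * z' j i) /
                (∑ j ∈ Finset.Icc 1 N, p j * z' j i)) ∈ Ico (y (i-1)) (y i)) ∧
          (i = K →
            m ((∑ j ∈ Finset.Icc 1 N, νv j * p j * z' j i) /
                (∑ j ∈ Finset.Icc 1 N, p j * z' j i)) ∈ Icc (y (K-1)) 1))) ∧
      (∑ j ∈ Finset.Icc 1 N, ∑ i : ι,
          p j * z j i *
            h (m ((∑ j' ∈ Finset.Icc 1 N, νv j' * p j' * z j' i) /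
                  (∑ j' ∈ Finset.Icc 1 N, p j' * z j' i))) (νv j)) ≤
        ∑ j ∈ Finset.Icc 1 N, ∑ i ∈ Finset.Icc 1 K,
          p j * z' j i *
            h (m ((∑ j' ∈ Finset.Icc 1 N, νv j' * p j' * z' j' i) /
                  (∑ j' ∈ Finset.Icc 1 N, p j' * z' j' i))) (νv j) := by
  classical
  -- basic nonnegativity facts
  have hq0 : ∀ i : ι, (0:ℝ) ≤ ∑ j ∈ Finset.Icc 1 N, p j * z j i :=
    fun i => Finset.sum_nonneg fun j hj => mul_nonneg (hp_nonneg j hj) (hz_nonneg j hj i)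
  have hnu0 : ∀ i : ι, (0:ℝ) ≤ ∑ j ∈ Finset.Icc 1 N, νv j * p j * z j i :=
    fun i => Finset.sum_nonneg fun j hj =>
      mul_nonneg (mul_nonneg (hνv j hj).1 (hp_nonneg j hj)) (hz_nonneg j hj i)
  have hnuq : ∀ i : ι, (∑ j ∈ Finset.Icc 1 N, νv j * p j * z j i) =
      (∑ j ∈ Finset.Icc 1 N, p j * z j i) *
        ((∑ j ∈ Finset.Icc 1 N, νv j * p j * z j i) / (∑ j ∈ Finset.Icc 1 N, p j * z j i)) := by
    intro i
    rcases eq_or_lt_of_le (hq0 i) with h0 | hpos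
    · have hz0 : ∀ j ∈ Finset.Icc 1 N, p j * z j i = 0 := by
        have := (Finset.sum_eq_zero_iff_of_nonneg
          (fun j hj => mul_nonneg (hp_nonneg j hj) (hz_nonneg j hj i))).mp h0.symm
        exact this
      have hU0 : (∑ j ∈ Finset.Icc 1 N, νv j * p j * z j i) = 0 :=
        Finset.sum_eq_zero fun j hj => by rw [mul_assoc, hz0 j hj, mul_zero]
      rw [hU0, ← h0, zero_mul]
    · exact (mul_div_cancel₀ _ (ne_of_gt hpos)).symm
  -- existence of a cell for each positive-probability signal
  have hcell : ∀ i : ι, 0 < (∑ j ∈ Finset.Icc 1 N, p j * z j i) →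
      ∃ k ∈ Finset.Icc 1 K,
        m ((∑ j ∈ Finset.Icc 1 N, νv j * p j * z j i) / (∑ j ∈ Finset.Icc 1 N, p j * z j i))
          ∈ cellT K y k := by
    intro i _
    have hμ0 : (0:ℝ) ≤ (∑ j ∈ Finset.Icc 1 N, νv j * p j * z j i) /
        (∑ j ∈ Finset.Icc 1 N, p j * z j i) := div_nonneg (hnu0 i) (hq0 i)
    have hm01 := hm_range _ (Set.mem_Ici.mpr hμ0)
    rcases lt_or_eq_of_le hm01.2 with hlt | heq
    · obtain ⟨k, hk, hmem⟩ := exists_cell_aux K hK y hy0 hyK hy_mono _ hm01.1 hlt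
      refine ⟨k, hk, ?_⟩
      by_cases hkK : k = K
      · subst hkK
        simp only [cellT, if_pos rfl]
        exact ⟨hmem.1, le_of_lt (by rw [← hyK]; exact hmem.2)⟩
      · simp only [cellT, if_neg hkK]
        exact hmem
    · refine ⟨K, Finset.mem_Icc.mpr ⟨hK, le_refl K⟩, ?_⟩
      simp only [cellT, if_pos rfl]
      have hyK1 : y (K-1) ≤ 1 := by
        have h1 := hy_mono (K-1) (by omega)
        have h2 : K - 1 + 1 = K := by omega
        rw [h2] at h1
        rw [← hyK]
        exact le_of_lt h1
      rw [heq]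
      exact ⟨hyK1, le_refl 1⟩
  -- the classification map κ
  obtain ⟨κ, hκ⟩ : ∃ κ : ι → ℕ, ∀ i : ι, κ i ∈ Finset.Icc 1 K ∧
      (0 < (∑ j ∈ Finset.Icc 1 N, p j * z j i) →
        m ((∑ j ∈ Finset.Icc 1 N, νv j * p j * z j i) / (∑ j ∈ Finset.Icc 1 N, p j * z j i))
          ∈ cellT K y (κ i)) := by
    refine ⟨fun i => if hi : 0 < (∑ j ∈ Finset.Icc 1 N, p j * z j i)
        then (hcell i hi).choose else K, fun i => ?_⟩
    by_cases hi : 0 < (∑ j ∈ Finset.Icc 1 N, p j * z j i)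
    · simp only [dif_pos hi]
      exact ⟨(hcell i hi).choose_spec.1, fun _ => (hcell i hi).choose_spec.2⟩
    · simp only [dif_neg hi]
      exact ⟨Finset.mem_Icc.mpr ⟨hK, le_refl K⟩, fun hx => absurd hx hi⟩
  -- fiber sum identities
  have hq' : ∀ k : ℕ,
      (∑ j ∈ Finset.Icc 1 N, p j * ∑ i ∈ Finset.univ.filter (fun i => κ i = k), z j i)
       = ∑ i ∈ Finset.univ.filter (fun i => κ i = k), ∑ j ∈ Finset.Icc 1 N, p j * z j i := by
    intro k
    simp only [Finset.mul_sum]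
    rw [Finset.sum_comm]
  have hnum' : ∀ k : ℕ,
      (∑ j ∈ Finset.Icc 1 N, νv j * p j * ∑ i ∈ Finset.univ.filter (fun i => κ i = k), z j i)
       = ∑ i ∈ Finset.univ.filter (fun i => κ i = k), ∑ j ∈ Finset.Icc 1 N, νv j * p j * z j i := by
    intro k
    simp only [Finset.mul_sum]
    rw [Finset.sum_comm]
  -- the key cell property of the pooled posterior
  have hmain : ∀ k, 0 < (∑ i ∈ Finset.univ.filter (fun i => κ i = k),
        ∑ j ∈ Finset.Icc 1 N, p j * z j i) →
      m ((∑ i ∈ Finset.univ.filter (fun i => κ i = k), ∑ j ∈ Finset.Icc 1 N, νv j * p j * z j i)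
        / (∑ i ∈ Finset.univ.filter (fun i => κ i = k), ∑ j ∈ Finset.Icc 1 N, p j * z j i))
        ∈ cellT K y k := by
    intro k hpos
    rw [Finset.sum_congr rfl (fun (i : ι) _ => hnuq i)]
    obtain ⟨a, haf, b, hbf, hwa, hwb, hle1, hle2⟩ :=
      exists_avg_bounds (Finset.univ.filter (fun i => κ i = k))
        (fun i => ∑ j ∈ Finset.Icc 1 N, p j * z j i)
        (fun i => (∑ j ∈ Finset.Icc 1 N, νv j * p j * z j i) /
          (∑ j ∈ Finset.Icc 1 N, p j * z j i))
        (fun i _ => hq0 i) hpos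
    have hμa0 : (0:ℝ) ≤ (∑ j ∈ Finset.Icc 1 N, νv j * p j * z j a) /
        (∑ j ∈ Finset.Icc 1 N, p j * z j a) := div_nonneg (hnu0 a) (hq0 a)
    have hμb0 : (0:ℝ) ≤ (∑ j ∈ Finset.Icc 1 N, νv j * p j * z j b) /
        (∑ j ∈ Finset.Icc 1 N, p j * z j b) := div_nonneg (hnu0 b) (hq0 b)
    have hμ'0 : (0:ℝ) ≤ (∑ i ∈ Finset.univ.filter (fun i => κ i = k),
        (∑ j ∈ Finset.Icc 1 N, p j * z j i) *
          ((∑ j ∈ Finset.Icc 1 N, νv j * p j * z j i) / (∑ j ∈ Finset.Icc 1 N, p j * z j i)))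
        / (∑ i ∈ Finset.univ.filter (fun i => κ i = k), ∑ j ∈ Finset.Icc 1 N, p j * z j i) :=
      div_nonneg (Finset.sum_nonneg fun i _ =>
        mul_nonneg (hq0 i) (div_nonneg (hnu0 i) (hq0 i))) (le_of_lt hpos)
    have hma := hm_mono (Set.mem_Ici.mpr hμa0) (Set.mem_Ici.mpr hμ'0) hle1
    have hmb := hm_mono (Set.mem_Ici.mpr hμ'0) (Set.mem_Ici.mpr hμb0) hle2
    have hka : κ a = k := (Finset.mem_filter.mp haf).2
    have hkb : κ b = k := (Finset.mem_filter.mp hbf).2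
    exact cellT_conv K y k (hka ▸ (hκ a).2 hwa) (hkb ▸ (hκ b).2 hwb) hma hmb
  -- evaluation of h on a cell
  have heval : ∀ j ∈ Finset.Icc 1 N, ∀ k ∈ Finset.Icc 1 K, ∀ t ∈ cellT K y k,
      h t (νv j) = c j k :=
    fun j hj => cellT_eval K y hyK (fun x => h x (νv j)) (c j) (hstep j hj) (hstep_top j hj)
  -- the key equality of utilities per (j, i)
  have hkey : ∀ j ∈ Finset.Icc 1 N, ∀ i : ι,
      p j * z j i * h (m ((∑ j' ∈ Finset.Icc 1 N, νv j' * p j' * z j' i) /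
          (∑ j' ∈ Finset.Icc 1 N, p j' * z j' i))) (νv j)
      = p j * z j i * h (m ((∑ i' ∈ Finset.univ.filter (fun i' => κ i' = κ i),
            ∑ j' ∈ Finset.Icc 1 N, νv j' * p j' * z j' i')
          / (∑ i' ∈ Finset.univ.filter (fun i' => κ i' = κ i),
            ∑ j' ∈ Finset.Icc 1 N, p j' * z j' i'))) (νv j) := by
    intro j hj i
    rcases eq_or_lt_of_le (mul_nonneg (hp_nonneg j hj) (hz_nonneg j hj i)) with h0 | hposji
    · rw [← h0, zero_mul, zero_mul]
    · have hqi : 0 < ∑ j' ∈ Finset.Icc 1 N, p j' * z j' i :=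
        lt_of_lt_of_le hposji (Finset.single_le_sum
          (f := fun j' => p j' * z j' i)
          (fun j' hj' => mul_nonneg (hp_nonneg j' hj') (hz_nonneg j' hj' i)) hj)
      have hfi : i ∈ Finset.univ.filter (fun i' => κ i' = κ i) :=
        Finset.mem_filter.mpr ⟨Finset.mem_univ i, rfl⟩
      have hfpos : 0 < ∑ i' ∈ Finset.univ.filter (fun i' => κ i' = κ i),
          ∑ j' ∈ Finset.Icc 1 N, p j' * z j' i' :=
        lt_of_lt_of_le hqi (Finset.single_le_sum (fun i' _ => hq0 i') hfi)
      rw [heval j hj (κ i) (hκ i).1 _ ((hκ i).2 hqi),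
        heval j hj (κ i) (hκ i).1 _ (hmain (κ i) hfpos)]
  -- construct the new mechanism
  refine ⟨fun j k => ∑ i ∈ Finset.univ.filter (fun i => κ i = k), z j i, ?_, ?_, ?_, ?_⟩
  · intro j hj i _
    exact Finset.sum_nonneg fun i' _ => hz_nonneg j hj i'
  · intro j hj
    rw [Finset.sum_fiberwise_of_maps_to (fun i _ => (hκ i).1) (z j)]
    exact hz_sum j hj
  · intro i hi hpos
    rw [hq' i] at hpos
    have h3 := hmain i hpos
    rw [hq' i, hnum' i]
    constructor
    · intro hiK
      have hne : i ≠ K := Nat.ne_of_lt hiK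
      simpa only [cellT, if_neg hne] using h3
    · intro hiK
      simpa only [cellT, if_pos hiK] using h3
  · simp only [hq', hnum']
    apply le_of_eq
    calc ∑ j ∈ Finset.Icc 1 N, ∑ i : ι,
          p j * z j i *
            h (m ((∑ j' ∈ Finset.Icc 1 N, νv j' * p j' * z j' i) /
                  (∑ j' ∈ Finset.Icc 1 N, p j' * z j' i))) (νv j)
        = ∑ j ∈ Finset.Icc 1 N, ∑ i : ι,
          p j * z j i *
            h (m ((∑ i' ∈ Finset.univ.filter (fun i' => κ i' = κ i),
                ∑ j' ∈ Finset.Icc 1 N, νv j' * p j' * z j' i')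
              / (∑ i' ∈ Finset.univ.filter (fun i' => κ i' = κ i),
                ∑ j' ∈ Finset.Icc 1 N, p j' * z j' i'))) (νv j) :=
          Finset.sum_congr rfl fun j hj => Finset.sum_congr rfl fun i _ => hkey j hj i
      _ = _ := by
          refine Finset.sum_congr rfl (fun j hj => ?_)
          rw [← Finset.sum_fiberwise_of_maps_to (fun i _ => (hκ i).1)
            (fun i => p j * z j i *
              h (m ((∑ i' ∈ Finset.univ.filter (fun i' => κ i' = κ i),
                  ∑ j' ∈ Finset.Icc 1 N, νv j' * p j' * z j' i')
                / (∑ i' ∈ Finset.univ.filter (fun i' => κ i' = κ i),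
                  ∑ j' ∈ Finset.Icc 1 N, p j' * z j' i'))) (νv j))]
          refine Finset.sum_congr rfl (fun k hk => ?_)
          rw [Finset.mul_sum, Finset.sum_mul]
          refine Finset.sum_congr rfl (fun i hif => ?_)
          have hik : κ i = k := (Finset.mem_filter.mp hif).2
          rw [hik]
end

section
/- (Every monotone partitional mechanism attains value 1/3 in the pooling example.) For every n ∈ ℕ with n ≥ 1 and every partition 0 = t₀ < t₁ < ⋯ < t_n = 1, one has Σ_{j=1}^{n} ∫_{t_{j−1}}^{t_j} |θ/3 − (t_{j−1} + t_j)/2| dθ = 1/3. Equivalently, in the state-dependent example with planner utility h(y; θ) = |θ/3 − y|, equilibrium map m equal to the identity, and state θ uniformly distributed on [0,1], every monotone partitional signaling mechanism (which on the cell (t_{j−1}, t_j] induces the posterior mean (t_{j−1} + t_j)/2) achieves planner value exactly 1/3. -/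
lemma mps_cell_value (a b : ℝ) (ha : 0 ≤ a) (hab : a < b) :
    ∫ θ in a..b, |θ / 3 - (a + b) / 2| = (b ^ 2 - a ^ 2) / 3 := by
  have hcong : ∫ θ in a..b, |θ / 3 - (a + b) / 2|
      = ∫ θ in a..b, ((a + b) / 2 - θ / 3) := by
    apply intervalIntegral.integral_congr
    intro x hx
    rw [Set.uIcc_of_le hab.le] at hx
    have hx1 : a ≤ x := hx.1
    have hx2 : x ≤ b := hx.2
    have : x / 3 - (a + b) / 2 ≤ 0 := by nlinarith
    simpa [abs_of_nonpos this] using by ring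
  rw [hcong]
  have h1 : ∫ θ in a..b, ((a + b) / 2 - θ / 3)
      = (∫ θ in a..b, ((a + b) / 2 : ℝ)) - ∫ θ in a..b, θ / 3 := by
    apply intervalIntegral.integral_sub intervalIntegrable_const
    exact (intervalIntegral.intervalIntegrable_id).div_const 3
  have h2 : (∫ θ in a..b, (θ / 3 : ℝ)) = (∫ θ in a..b, (θ : ℝ)) / 3 :=
    intervalIntegral.integral_div 3 _
  rw [h1, h2, intervalIntegral.integral_const, integral_id, smul_eq_mul]
  ring

/-- Every monotone partitional mechanism attains value 1/3 in the
pooling example: for every partition `0 = t₀ < t₁ < ⋯ < t_n = 1`,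
`Σ_{j=1}^{n} ∫_{t_{j−1}}^{t_j} |θ/3 − (t_{j−1} + t_j)/2| dθ = 1/3`. -/
theorem mps_value_one_third
    (n : ℕ) (hn : 1 ≤ n) (t : ℕ → ℝ)
    (h0 : t 0 = 0) (h1 : t n = 1)
    (hmono : ∀ j < n, t j < t (j+1)) :
    ∑ j ∈ Finset.range n,
      ∫ θ in (t j)..(t (j+1)), |θ / 3 - (t j + t (j+1)) / 2| = 1 / 3 := by
  have hnn : ∀ j, j ≤ n → 0 ≤ t j := by
    intro j hj
    induction j with
    | zero => simp [h0]
    | succ k ih =>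
      have hk : k < n := Nat.lt_of_succ_le hj
      exact le_of_lt (lt_of_le_of_lt (ih hk.le) (hmono k hk))
  have key : ∀ j ∈ Finset.range n,
      (∫ θ in (t j)..(t (j+1)), |θ / 3 - (t j + t (j+1)) / 2|)
        = (t (j+1)) ^ 2 / 3 - (t j) ^ 2 / 3 := by
    intro j hj
    rw [Finset.mem_range] at hj
    rw [mps_cell_value (t j) (t (j+1)) (hnn j hj.le) (hmono j hj)]
    ring
  rw [Finset.sum_congr rfl key, Finset.sum_range_sub (fun j => (t j) ^ 2 / 3)]
  rw [h0, h1]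
  norm_num
end
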